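/- arXiv:1302.3009 — 8 statements merged into one kernel-verified Lean document; each statement's English description precedes it below -/
import Mathlib

section
/- Let (W,S) be a Coxeter system with length function ℓ. Suppose 𝐬 = (s_1,…,s_q) is a word in S whose Demazure product is w ∈ W, and suppose for some k ≤ q that (s_1,…,s_k) is a reduced word for u = s_1⋯s_k. Then there exists a subsequence 𝐪 of (s_{k+1},…,s_q) such that the concatenation (s_1,…,s_k) followed by 𝐪 is a reduced word for w. (In particular u ≤_R w in the right weak order on W.) -/
/-- The Demazure product of a word in a Coxeter system. -/
noncomputable def demazureProd {B : Type*} {W : Type*} [Group W] {M : CoxeterMatrix B}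
    (cs : CoxeterSystem M W) : List B → W
  | [] => 1
  | s :: t =>
      if cs.length (cs.simple s * demazureProd cs t) > cs.length (demazureProd cs t)
      then cs.simple s * demazureProd cs t
      else demazureProd cs t

/-- The right weak order on a Coxeter group: the transitive (reflexive) closure of
`u <_R u * s` for a simple reflection `s` with `ℓ(u) < ℓ(u s)`. -/
def RightWeakLe {B : Type*} {W : Type*} [Group W] {M : CoxeterMatrix B}
    (cs : CoxeterSystem M W) (u w : W) : Prop :=
  Relation.ReflTransGen (fun x y => ∃ s : B, y = x * cs.simple s ∧ cs.length x < cs.length y) u w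

/-!
The key input is the exchange property: if `s i` is a left descent of `π ω`, then `s i * π ω`
is the product of `ω` with one letter deleted, namely a letter where `s i` occurs in the left
inversion sequence of `ω`. That it occurs there comes from Tits' permutation representation of
`W` on `W × ZMod 2`: it shows that the parity of the number of occurrences of `t` in the left
inversion sequence of a word depends only on the product of the word, and for a reduced word
starting with `i` the reflection `s i` occurs exactly once.

The theorem then follows by induction on `ω₁`. The Demazure product of `i :: ω` is either
`s i` times that of `ω`, in which case `i` is prepended to the reduced word, or equal to it, in
which case the exchange property deletes one letter of the reduced word `ω₁ ++ q`; since
`i :: ω₁` is reduced, that letter lies in `q`.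
-/

namespace CoxeterSystem

open List

variable {B W : Type*} [Group W] {M : CoxeterMatrix B} (cs : CoxeterSystem M W)

local prefix:100 "s" => cs.simple
local prefix:100 "π" => cs.wordProd
local prefix:100 "ℓ" => cs.length
local prefix:100 "lis " => cs.leftInvSeq

theorem simple_mul_mul_simple_eq_simple_iff (i : B) (t : W) : s i * t * s i = s i ↔ t = s i := by
  rw [mul_assoc, mul_eq_left, mul_eq_one_iff_eq_inv, inv_simple]

theorem simple_mul_conj_simple_mul (i : B) (t : W) : s i * (s i * t * s i) * s i = t := by
  simp only [mul_assoc, simple_mul_simple_cancel_left, simple_mul_simple_self, mul_one]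

section PermutationRepresentation

variable [DecidableEq W]

theorem count_leftInvSeq_cons (i : B) (ω : List B) (t : W) :
    (lis (i :: ω)).count t = (lis ω).count (s i * t * s i) + if t = s i then 1 else 0 := by
  have hconj : t = MulAut.conj (s i) (s i * t * s i) := by
    rw [MulAut.conj_apply, inv_simple, simple_mul_conj_simple_mul]
  rw [leftInvSeq, count_cons, hconj, count_map_of_injective _ _ (MulAut.conj (s i)).injective,
    ← hconj]
  simp only [beq_iff_eq, @eq_comm _ (s i) t]

-- Tits' action on `reflections × {±1}`, extended to all of `W` to avoid naming the reflections.
noncomputable def simplePerm (i : B) : Equiv.Perm (W × ZMod 2) :=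
  Function.Involutive.toPerm (fun p => (s i * p.1 * s i, p.2 + if p.1 = s i then 1 else 0)) <| by
    rintro ⟨t, ε⟩
    simp only [simple_mul_conj_simple_mul, simple_mul_mul_simple_eq_simple_iff, add_assoc,
      CharTwo.add_self_eq_zero, add_zero]

theorem simplePerm_apply (i : B) (t : W) (ε : ZMod 2) :
    cs.simplePerm i (t, ε) = (s i * t * s i, ε + if t = s i then 1 else 0) := rfl

noncomputable def wordPerm (ω : List B) : Equiv.Perm (W × ZMod 2) :=
  (ω.map cs.simplePerm).prod

theorem wordPerm_cons (i : B) (ω : List B) :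
    cs.wordPerm (i :: ω) = cs.simplePerm i * cs.wordPerm ω := by
  rw [wordPerm, map_cons, prod_cons, wordPerm]

theorem wordPerm_apply (ω : List B) (t : W) (ε : ZMod 2) :
    cs.wordPerm ω ((π ω)⁻¹ * t * π ω, ε) = (t, ε + (lis ω).count t) := by
  induction ω generalizing t with
  | nil => simp [wordPerm]
  | cons i ω ih =>
    have hconj :
        (π (i :: ω))⁻¹ * t * π (i :: ω) = (π ω)⁻¹ * (s i * t * s i) * π ω := by
      simp only [wordProd_cons, mul_inv_rev, inv_simple, mul_assoc]
    rw [hconj, wordPerm_cons, Equiv.Perm.mul_apply, ih,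
      simplePerm_apply, count_leftInvSeq_cons, simple_mul_conj_simple_mul]
    simp only [simple_mul_mul_simple_eq_simple_iff]
    push_cast
    rw [add_assoc]

theorem even_count_leftInvSeq_alternatingWord (i j : B) (t : W) :
    Even ((lis (alternatingWord i j (2 * M i j))).count t) := by
  set L := lis (alternatingWord i j (2 * M i j))
  have hlen : L.length = 2 * M i j := by simp [L]
  have hperiodic : L.drop (M i j) = L.take (M i j) := by
    refine ext_getElem (by simp only [length_drop, length_take, hlen]; omega) fun k h₁ _ => ?_
    have hk : k < M i j := by simp only [length_drop, hlen] at h₁; omega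
    rw [getElem_drop, getElem_take,
      cs.getElem_leftInvSeq_alternatingWord i j (M i j) (M i j + k) (by omega),
      cs.getElem_leftInvSeq_alternatingWord i j (M i j) k (by omega),
      prod_alternatingWord_eq_mul_pow, prod_alternatingWord_eq_mul_pow,
      show (2 * (M i j + k) + 1) / 2 = M i j + k by omega, show (2 * k + 1) / 2 = k by omega,
      pow_add, simple_mul_simple_pow', one_mul]
    simp only [Nat.even_add_one, even_two_mul]
  rw [← take_append_drop (M i j) L, hperiodic, count_append]
  exact ⟨_, rfl⟩

theorem wordPerm_alternatingWord_two_mul (i j : B) :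
    cs.wordPerm (alternatingWord i j (2 * M i j)) = 1 := by
  have hprod : π (alternatingWord i j (2 * M i j)) = 1 := by
    rw [prod_alternatingWord_eq_mul_pow, if_pos (even_two_mul _),
      Nat.mul_div_cancel_left _ two_pos, simple_mul_simple_pow, one_mul]
  refine Equiv.ext fun ⟨t, ε⟩ => ?_
  have := cs.wordPerm_apply (alternatingWord i j (2 * M i j)) t ε
  rwa [hprod, inv_one, one_mul, mul_one,
    (cs.even_count_leftInvSeq_alternatingWord i j t).natCast_zmod_two, add_zero] at this

theorem simplePerm_mul_simplePerm_pow (i j : B) (n : ℕ) :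
    (cs.simplePerm i * cs.simplePerm j) ^ n = cs.wordPerm (alternatingWord i j (2 * n)) := by
  induction n with
  | zero => rfl
  | succ n ih =>
    rw [pow_succ', ih, show 2 * (n + 1) = 2 * n + 1 + 1 by ring, alternatingWord_succ',
      alternatingWord_succ', wordPerm_cons, wordPerm_cons]
    simp only [Nat.even_add_one, even_two_mul, not_true, if_false, if_true, mul_assoc]

theorem isLiftable_simplePerm : M.IsLiftable cs.simplePerm := fun i j => by
  rw [simplePerm_mul_simplePerm_pow, wordPerm_alternatingWord_two_mul]

noncomputable def permRep : W →* Equiv.Perm (W × ZMod 2) :=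
  cs.lift ⟨cs.simplePerm, cs.isLiftable_simplePerm⟩

theorem permRep_wordProd (ω : List B) : cs.permRep (π ω) = cs.wordPerm ω := by
  induction ω with
  | nil => rw [wordProd_nil, map_one]; rfl
  | cons i ω ih => rw [wordProd_cons, map_mul, ih, permRep, lift_apply_simple, wordPerm_cons]

theorem count_leftInvSeq_cast_eq_of_wordProd_eq {ω ω' : List B} (h : π ω = π ω') (t : W) :
    ((lis ω).count t : ZMod 2) = (lis ω').count t := by
  have hperm : cs.wordPerm ω = cs.wordPerm ω' := by rw [← permRep_wordProd, h, permRep_wordProd]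
  have := cs.wordPerm_apply ω' t 0
  rw [← hperm, ← h, wordPerm_apply, Prod.mk.injEq] at this
  simpa using this.2

end PermutationRepresentation

theorem isReduced_cons_of_length_lt {ω : List B} (hω : cs.IsReduced ω) {i : B}
    (h : ℓ (π ω) < ℓ (s i * π ω)) : cs.IsReduced (i :: ω) := by
  have := (cs.length_simple_mul (π ω) i).resolve_right (by omega)
  rw [IsReduced, wordProd_cons, this, hω.eq, length_cons]

theorem simple_mem_leftInvSeq_of_isLeftDescent {ω : List B} {i : B}
    (hi : cs.IsLeftDescent (π ω) i) : s i ∈ lis ω := by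
  classical
  obtain ⟨τ, hτ, hτprod⟩ := cs.exists_isReduced (s i * π ω)
  have hprod : π (i :: τ) = π ω := by
    rw [wordProd_cons, ← hτprod, simple_mul_simple_cancel_left]
  have hred : cs.IsReduced (i :: τ) := by
    refine cs.isReduced_cons_of_length_lt hτ ?_
    rw [← hτprod, simple_mul_simple_cancel_left]
    exact hi
  have hcount : (lis (i :: τ)).count (s i) = 1 :=
    count_eq_one_of_mem hred.nodup_leftInvSeq mem_cons_self
  have hparity := cs.count_leftInvSeq_cast_eq_of_wordProd_eq hprod (s i)
  by_contra hnot
  rw [hcount, count_eq_zero_of_not_mem hnot] at hparity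
  exact one_ne_zero (by exact_mod_cast hparity)

theorem exists_eraseIdx_of_isLeftDescent {ω : List B} {i : B}
    (hi : cs.IsLeftDescent (π ω) i) : ∃ j < ω.length, s i * π ω = π (ω.eraseIdx j) := by
  obtain ⟨j, hj, hje⟩ := mem_iff_getElem.mp (cs.simple_mem_leftInvSeq_of_isLeftDescent hi)
  rw [length_leftInvSeq] at hj
  refine ⟨j, hj, ?_⟩
  rw [← getD_leftInvSeq_mul_wordProd, getD_eq_getElem _ _ (by simpa using hj), hje]

variable {cs} in
theorem IsReduced.wordProd_ne_of_length_lt {ω ω' : List B} (hω : cs.IsReduced ω)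
    (h : ω'.length < ω.length) : π ω ≠ π ω' := fun heq => by
  have := cs.length_wordProd_le ω'
  rw [← heq, hω.eq] at this
  omega

variable {cs} in
theorem IsReduced.of_append_left {ω ω' : List B} (h : cs.IsReduced (ω ++ ω')) :
    cs.IsReduced ω := by
  simpa using h.take ω.length

theorem exists_sublist_isReduced_demazureProd (ω : List B) :
    ∃ q, q <+ ω ∧ cs.IsReduced q ∧ π q = demazureProd cs ω := by
  induction ω with
  | nil => exact ⟨[], Sublist.slnil, by simp [IsReduced], rfl⟩
  | cons i ω ih =>
    obtain ⟨q, hsub, hred, hprod⟩ := ih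
    rw [demazureProd]
    split_ifs with h
    · rw [← hprod] at h ⊢
      exact ⟨i :: q, hsub.cons_cons i, cs.isReduced_cons_of_length_lt hred h,
        cs.wordProd_cons i q⟩
    · exact ⟨q, hsub.cons i, hred, hprod⟩

theorem exists_sublist_isReduced_append_demazureProd {ω₁ : List B} (hω₁ : cs.IsReduced ω₁)
    (ω₂ : List B) :
    ∃ q, q <+ ω₂ ∧ cs.IsReduced (ω₁ ++ q) ∧
      π (ω₁ ++ q) = demazureProd cs (ω₁ ++ ω₂) := by
  induction ω₁ with
  | nil => exact cs.exists_sublist_isReduced_demazureProd ω₂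
  | cons i ω₁ ih =>
    obtain ⟨q, hsub, hred, hprod⟩ := ih (by simpa using hω₁.drop 1)
    rw [cons_append, demazureProd, ← hprod]
    split_ifs with h
    · exact ⟨q, hsub, cs.isReduced_cons_of_length_lt hred h, cs.wordProd_cons i _⟩
    have hdesc : cs.IsLeftDescent (π (ω₁ ++ q)) i :=
      lt_of_le_of_ne (not_lt.mp h) (cs.length_simple_mul_ne _ i)
    obtain ⟨j, hj, hje⟩ := cs.exists_eraseIdx_of_isLeftDescent hdesc
    have hjge : ω₁.length ≤ j := by
      by_contra! hlt
      rw [eraseIdx_append_of_lt_length hlt, wordProd_append, wordProd_append, ← mul_assoc,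
        mul_left_inj, ← wordProd_cons] at hje
      refine hω₁.wordProd_ne_of_length_lt ?_ hje
      rw [length_eraseIdx_of_lt hlt, length_cons]
      omega
    rw [eraseIdx_append_of_length_le hjge] at hje
    have hprod' : π (i :: ω₁ ++ q.eraseIdx (j - ω₁.length)) = π (ω₁ ++ q) := by
      rw [cons_append, wordProd_cons, ← hje, simple_mul_simple_cancel_left]
    refine ⟨q.eraseIdx (j - ω₁.length), (eraseIdx_sublist _ _).trans hsub, ?_, hprod'⟩
    rw [IsReduced, hprod', hred.eq]
    simp only [length_append, length_cons, length_eraseIdx]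
    split_ifs <;> simp only [length_append] at hj <;> omega

theorem rightWeakLe_wordProd_of_isReduced_append {ω q : List B} (h : cs.IsReduced (ω ++ q)) :
    RightWeakLe cs (π ω) (π (ω ++ q)) := by
  induction q generalizing ω with
  | nil => rw [append_nil]; exact .refl
  | cons j q ih =>
    rw [← singleton_append, ← append_assoc] at h ⊢
    have hred := h.of_append_left
    refine .head ⟨j, by rw [wordProd_append, wordProd_singleton], ?_⟩ (ih h)
    rw [hred.eq, hred.of_append_left.eq, length_append, length_singleton]
    omega

end CoxeterSystem

/-- If the Demazure product of `ω₁ ++ ω₂` is `w` and `ω₁` is a reduced word for `u`,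
then some subsequence `q` of `ω₂` makes `ω₁ ++ q` a reduced word for `w`; in particular
`u ≤_R w` in the right weak order. -/
theorem stmt_1 {B : Type*} {W : Type*} [Group W] {M : CoxeterMatrix B}
    (cs : CoxeterSystem M W) (ω₁ ω₂ : List B) (w u : W)
    (h : demazureProd cs (ω₁ ++ ω₂) = w)
    (hprod : cs.wordProd ω₁ = u) (hlen : ω₁.length = cs.length u) :
    (∃ q : List B, q.Sublist ω₂ ∧ cs.wordProd (ω₁ ++ q) = w ∧
      (ω₁ ++ q).length = cs.length w) ∧ RightWeakLe cs u w := by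
  have hω₁ : cs.IsReduced ω₁ := by rw [CoxeterSystem.IsReduced, hprod, hlen]
  obtain ⟨q, hsub, hred, hq⟩ := cs.exists_sublist_isReduced_append_demazureProd hω₁ ω₂
  subst h hprod
  rw [← hq]
  exact ⟨⟨q, hsub, rfl, hred.symm⟩, cs.rightWeakLe_wordProd_of_isReduced_append hred⟩
end

section
/- Let (W,S) be a Coxeter system with length function ℓ. Suppose 𝐬 = (s_1,…,s_q) is a word in S whose Demazure product is w, where w is fully commutative, and suppose q > ℓ(w). Then there exist indices i < j such that s_i = s_j and s_i commutes with s_k for every k with i < k < j. -/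
/-- `ω` is a reduced word for `w`: its product is `w` and its length is `ℓ(w)`. -/
def IsReducedWordFor {B : Type*} {W : Type*} [Group W] {M : CoxeterMatrix B}
    (cs : CoxeterSystem M W) (ω : List B) (w : W) : Prop :=
  cs.wordProd ω = w ∧ ω.length = cs.length w

/-- A single commutation move: swap two adjacent letters whose simple reflections commute. -/
def CommMove {B : Type*} {W : Type*} [Group W] {M : CoxeterMatrix B}
    (cs : CoxeterSystem M W) (ω ω' : List B) : Prop :=
  ∃ (l₁ l₂ : List B) (s t : B), ω = l₁ ++ s :: t :: l₂ ∧ ω' = l₁ ++ t :: s :: l₂ ∧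
    cs.simple s * cs.simple t = cs.simple t * cs.simple s

/-- `w` is fully commutative: any reduced word for `w` can be obtained from any other
by a finite sequence of commutation moves. -/
def FullyCommutative {B : Type*} {W : Type*} [Group W] {M : CoxeterMatrix B}
    (cs : CoxeterSystem M W) (w : W) : Prop :=
  ∀ ω ω' : List B, IsReducedWordFor cs ω w → IsReducedWordFor cs ω' w →
    Relation.ReflTransGen (CommMove cs) ω ω'

/-!
Induct on the word `ω = s :: t`, with `u` the Demazure product of `t`. If `s` is not a left
descent of `u`, then `w = s u` and `u = s w` is again fully commutative, because the letter `s`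
at the front of a reduced word `s :: α` for `w` can only be moved by commutation moves past
letters commuting with it; so induction applies to `t`. If `s` is a left descent of `u = w` and
`t` is not reduced, induction applies to `t` directly. Otherwise `t` and `s :: r` are both reduced
words for `w`, so `t` is reached from `s :: r` by commutation moves, and the letter `s` of
`s :: r` ends up in `t` preceded only by letters commuting with `s`: this occurrence and the
leading `s` of `ω` are the required pair.
-/

section Coxeter

variable {B W : Type*} [Group W] {M : CoxeterMatrix B} {cs : CoxeterSystem M W}

theorem wordProd_append_cons_of_commute {i : B} {δ₁ δ₂ : List B}
    (hcomm : ∀ t ∈ δ₁, Commute (cs.simple i) (cs.simple t)) :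
    cs.wordProd (δ₁ ++ i :: δ₂) = cs.simple i * cs.wordProd (δ₁ ++ δ₂) := by
  have : Commute (cs.simple i) (cs.wordProd δ₁) :=
    Commute.list_prod_right _ _ (by simpa [List.mem_map] using hcomm)
  simp only [cs.wordProd_append, cs.wordProd_cons, ← mul_assoc, this.eq]

theorem CommMove.exists_append_cons {i : B} {δ₁ δ₂ γ : List B}
    (hcomm : ∀ t ∈ δ₁, Commute (cs.simple i) (cs.simple t))
    (h : CommMove cs (δ₁ ++ i :: δ₂) γ) :
    ∃ δ₁' δ₂' : List B, γ = δ₁' ++ i :: δ₂' ∧ (∀ t ∈ δ₁', Commute (cs.simple i) (cs.simple t)) ∧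
      Relation.ReflGen (CommMove cs) (δ₁ ++ δ₂) (δ₁' ++ δ₂') := by
  obtain ⟨l₁, l₂, a, b, heq, rfl, hab⟩ := h
  rcases List.append_eq_append_iff.mp heq with ⟨m, rfl, hm⟩ | ⟨m, rfl, hm⟩
  · rcases List.cons_eq_append_iff.mp hm with ⟨rfl, ⟨rfl, rfl⟩⟩ | ⟨m, rfl, rfl⟩
    · exact ⟨δ₁ ++ [b], l₂, by simp, by simpa [or_imp, forall_and] using ⟨hcomm, hab⟩,
        by simp [Relation.ReflGen.refl]⟩
    · exact ⟨δ₁, m ++ b :: a :: l₂, by simp, hcomm,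
        .single ⟨δ₁ ++ m, l₂, a, b, by simp, by simp, hab⟩⟩
  · rcases List.cons_eq_append_iff.mp hm with ⟨rfl, ⟨rfl, rfl⟩⟩ | ⟨m, rfl, hm'⟩
    · simp only [List.append_nil] at hcomm
      exact ⟨l₁ ++ [b], l₂, by simp, by simpa [or_imp, forall_and] using ⟨hcomm, hab⟩,
        by simp [Relation.ReflGen.refl]⟩
    rcases List.cons_eq_append_iff.mp hm' with ⟨rfl, ⟨rfl, rfl⟩⟩ | ⟨m, rfl, rfl⟩
    · exact ⟨l₁, a :: δ₂, by simp, fun t ht => hcomm t (by simp [ht]),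
        by simp [Relation.ReflGen.refl]⟩
    · refine ⟨l₁ ++ b :: a :: m, δ₂, by simp, fun t ht => hcomm t ?_,
        .single ⟨l₁, m ++ δ₂, a, b, by simp, by simp, hab⟩⟩
      simp only [List.mem_append, List.mem_cons] at ht ⊢
      tauto

theorem exists_append_cons_of_reflTransGen_commMove {i : B} {α δ : List B}
    (h : Relation.ReflTransGen (CommMove cs) (i :: α) δ) :
    ∃ δ₁ δ₂ : List B, δ = δ₁ ++ i :: δ₂ ∧ (∀ t ∈ δ₁, Commute (cs.simple i) (cs.simple t)) ∧
      Relation.ReflTransGen (CommMove cs) α (δ₁ ++ δ₂) := by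
  induction h with
  | refl => exact ⟨[], α, rfl, by simp, .refl⟩
  | tail _ hstep ih =>
    obtain ⟨δ₁, δ₂, rfl, hcomm, hα⟩ := ih
    obtain ⟨δ₁', δ₂', rfl, hcomm', hstep'⟩ := hstep.exists_append_cons hcomm
    exact ⟨δ₁', δ₂', rfl, hcomm', hα.trans hstep'.to_reflTransGen⟩

theorem exists_isReducedWordFor (w : W) : ∃ ω, IsReducedWordFor cs ω w := by
  obtain ⟨ω, hω, rfl⟩ := cs.exists_isReduced w
  exact ⟨ω, rfl, hω.symm⟩

theorem IsReducedWordFor.cons {i : B} {ω : List B} {w : W}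
    (hω : IsReducedWordFor cs ω (cs.simple i * w)) (hi : cs.IsLeftDescent w i) :
    IsReducedWordFor cs (i :: ω) w := by
  refine ⟨by rw [cs.wordProd_cons, hω.1, cs.simple_mul_simple_cancel_left], ?_⟩
  rw [List.length_cons, hω.2, cs.isLeftDescent_iff.mp hi]

theorem FullyCommutative.simple_mul {w : W} (hfc : FullyCommutative cs w) {i : B}
    (hi : cs.IsLeftDescent w i) : FullyCommutative cs (cs.simple i * w) := by
  intro α β hα hβ
  obtain ⟨δ₁, δ₂, hβ', hcomm, hα'⟩ :=
    exists_append_cons_of_reflTransGen_commMove (hfc _ _ (hα.cons hi) (hβ.cons hi))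
  rcases δ₁ with _ | ⟨j, δ₁⟩
  · obtain rfl : β = δ₂ := by simpa using hβ'
    simpa using hα'
  · -- Then `β` hides a letter `i` that can be moved to its front, and deleting it from `β`
    -- leaves a word for `w` with only `ℓ w - 2` letters.
    exfalso
    obtain ⟨rfl, rfl⟩ : i = j ∧ β = δ₁ ++ i :: δ₂ := by simpa using hβ'
    have hw : cs.wordProd (δ₁ ++ δ₂) = w := by
      rw [← cs.simple_mul_simple_cancel_left (w := cs.wordProd (δ₁ ++ δ₂)) i,
        ← wordProd_append_cons_of_commute (fun t ht => hcomm t (by simp [ht])), hβ.1,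
        cs.simple_mul_simple_cancel_left]
    have hshort : (δ₁ ++ δ₂).length + 2 = cs.length w := by
      rw [← cs.isLeftDescent_iff.mp hi, ← hβ.2]
      simp
      omega
    have := hw ▸ cs.length_wordProd_le (δ₁ ++ δ₂)
    omega

theorem demazureProd_cons_of_isLeftDescent {i : B} {ω : List B}
    (h : cs.IsLeftDescent (demazureProd cs ω) i) :
    demazureProd cs (i :: ω) = demazureProd cs ω := by
  rw [demazureProd, if_neg (lt_asymm h)]

theorem demazureProd_cons_of_not_isLeftDescent {i : B} {ω : List B}
    (h : ¬cs.IsLeftDescent (demazureProd cs ω) i) :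
    demazureProd cs (i :: ω) = cs.simple i * demazureProd cs ω := by
  rw [demazureProd, if_pos (by rw [cs.not_isLeftDescent_iff] at h; omega)]

theorem length_demazureProd_le (ω : List B) : cs.length (demazureProd cs ω) ≤ ω.length := by
  induction ω with
  | nil => simp [demazureProd]
  | cons i ω ih =>
    by_cases hd : cs.IsLeftDescent (demazureProd cs ω) i
    · rw [demazureProd_cons_of_isLeftDescent hd, List.length_cons]
      omega
    · rw [demazureProd_cons_of_not_isLeftDescent hd, cs.not_isLeftDescent_iff.mp hd,
        List.length_cons]
      omega

theorem isReducedWordFor_demazureProd {ω : List B}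
    (h : cs.length (demazureProd cs ω) = ω.length) :
    IsReducedWordFor cs ω (demazureProd cs ω) := by
  induction ω with
  | nil => simp [IsReducedWordFor, demazureProd]
  | cons i ω ih =>
    by_cases hd : cs.IsLeftDescent (demazureProd cs ω) i
    · rw [demazureProd_cons_of_isLeftDescent hd, List.length_cons] at h
      have := length_demazureProd_le (cs := cs) ω
      omega
    · rw [demazureProd_cons_of_not_isLeftDescent hd] at h ⊢
      have hω : cs.length (demazureProd cs ω) = ω.length := by
        rw [cs.not_isLeftDescent_iff.mp hd, List.length_cons] at h
        omega
      exact ⟨by rw [cs.wordProd_cons, (ih hω).1], h.symm⟩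

def HasCommutingRepeat (cs : CoxeterSystem M W) (ω : List B) : Prop :=
  ∃ (l₁ l₂ l₃ : List B) (i : B), ω = l₁ ++ i :: (l₂ ++ i :: l₃) ∧
    ∀ t ∈ l₂, Commute (cs.simple i) (cs.simple t)

theorem HasCommutingRepeat.cons {ω : List B} (h : HasCommutingRepeat cs ω) (j : B) :
    HasCommutingRepeat cs (j :: ω) := by
  obtain ⟨l₁, l₂, l₃, i, rfl, hcomm⟩ := h
  exact ⟨j :: l₁, l₂, l₃, i, rfl, hcomm⟩

theorem HasCommutingRepeat.exists_get {ω : List B} (h : HasCommutingRepeat cs ω) :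
    ∃ (i j : ℕ) (hi : i < ω.length) (hj : j < ω.length), i < j ∧
      ω.get ⟨i, hi⟩ = ω.get ⟨j, hj⟩ ∧
      ∀ (k : ℕ) (hk : k < ω.length), i < k → k < j →
        Commute (cs.simple (ω.get ⟨i, hi⟩)) (cs.simple (ω.get ⟨k, hk⟩)) := by
  obtain ⟨l₁, l₂, l₃, i, rfl, hcomm⟩ := h
  refine ⟨l₁.length, l₁.length + (l₂.length + 1), by simp, by simp, by omega, ?_, ?_⟩
  · simp [List.getElem_append_right]
  · intro k hk hik hkj
    obtain ⟨m, rfl⟩ : ∃ m, k = l₁.length + (m + 1) := ⟨k - (l₁.length + 1), by omega⟩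
    have hm : m < l₂.length := by omega
    simpa [List.getElem_append_right, List.getElem_append_left hm] using
      hcomm _ (List.getElem_mem hm)

theorem hasCommutingRepeat_of_length_demazureProd_lt {ω : List B}
    (hfc : FullyCommutative cs (demazureProd cs ω))
    (hlen : cs.length (demazureProd cs ω) < ω.length) : HasCommutingRepeat cs ω := by
  induction ω with
  | nil => simp at hlen
  | cons i ω ih =>
    by_cases hd : cs.IsLeftDescent (demazureProd cs ω) i
    · rw [demazureProd_cons_of_isLeftDescent hd] at hfc hlen
      rcases (length_demazureProd_le (cs := cs) ω).lt_or_eq with hlt | heq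
      · exact (ih hfc hlt).cons i
      · obtain ⟨r, hr⟩ := exists_isReducedWordFor (cs.simple i * demazureProd cs ω)
        obtain ⟨δ₁, δ₂, rfl, hcomm, -⟩ := exists_append_cons_of_reflTransGen_commMove
          (hfc _ _ (hr.cons hd) (isReducedWordFor_demazureProd heq))
        exact ⟨[], δ₁, δ₂, i, rfl, hcomm⟩
    · rw [demazureProd_cons_of_not_isLeftDescent hd] at hfc hlen
      have hfc' := hfc.simple_mul (i := i) (by
        rwa [cs.isLeftDescent_iff_not_isLeftDescent_mul, cs.simple_mul_simple_cancel_left])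
      rw [cs.simple_mul_simple_cancel_left] at hfc'
      rw [cs.not_isLeftDescent_iff.mp hd, List.length_cons] at hlen
      exact (ih hfc' (by omega)).cons i

end Coxeter

/-- If the Demazure product of `ω` is a fully commutative element `w` and the length of
`ω` exceeds `ℓ(w)`, then there are positions `i < j` carrying the same letter such that
this letter commutes with every letter strictly between them. -/
theorem stmt_3 {B : Type*} {W : Type*} [Group W] {M : CoxeterMatrix B}
    (cs : CoxeterSystem M W) (w : W) (hfc : FullyCommutative cs w)
    (ω : List B) (h : demazureProd cs ω = w) (hlen : cs.length w < ω.length) :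
    ∃ (i j : ℕ) (hi : i < ω.length) (hj : j < ω.length), i < j ∧
      ω.get ⟨i, hi⟩ = ω.get ⟨j, hj⟩ ∧
      ∀ (k : ℕ) (hk : k < ω.length), i < k → k < j →
        Commute (cs.simple (ω.get ⟨i, hi⟩)) (cs.simple (ω.get ⟨k, hk⟩)) := by
  subst h
  exact (hasCommutingRepeat_of_length_demazureProd_lt hfc hlen).exists_get
end

section
/- Fix n ≥ 1 and let v ∈ S_{2n} be an n-Grassmannian permutation (taking d = n). Then v is symmetric, i.e., v(2n+1−i) = 2n+1−v(i) for i = 1,…,n, if and only if its associated partition λ_v is symmetric, i.e., (λ_v)^t = λ_v. -/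
/-- The value of a permutation of `Fin n` at the (1-indexed) position `k`
(as a 1-indexed value in `{1, …, n}`); `0` if `k` is out of range. -/
def permVal1 {n : ℕ} (v : Equiv.Perm (Fin n)) (k : ℕ) : ℕ :=
  if h : 0 < k ∧ k ≤ n then (v ⟨k - 1, by omega⟩).val + 1 else 0

/-- `v` is `d`-Grassmannian: `v(1) < ⋯ < v(d)` and `v(d+1) < ⋯ < v(n)`. -/
def IsGrassmannian {n : ℕ} (d : ℕ) (v : Equiv.Perm (Fin n)) : Prop :=
  (∀ i j : ℕ, 1 ≤ i → i < j → j ≤ d → permVal1 v i < permVal1 v j) ∧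
  (∀ i j : ℕ, d + 1 ≤ i → i < j → j ≤ n → permVal1 v i < permVal1 v j)

/-- The set of inversions of `v`: pairs `(i, j)` with `1 ≤ i < j ≤ n` and `v(i) > v(j)`. -/
def invPairs {n : ℕ} (v : Equiv.Perm (Fin n)) : Finset (ℕ × ℕ) :=
  ((Finset.Icc 1 n) ×ˢ (Finset.Icc 1 n)).filter
    (fun p => p.1 < p.2 ∧ permVal1 v p.2 < permVal1 v p.1)

/-!
Since `v` increases on each block, for `k ≤ n` the number `v(k) - k` counts the values of the
second block below `v(k)`. Hence `v(n+j) < v(k)` iff `k + j ≤ v(k)`, and counting such `k` gives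
`(λ_v)ᵗ_j = n + j - v(n+j)`. As `(λ_v)_j = v(n+1-j) - (n+1-j)`, the equation `(λ_v)ᵗ_j = (λ_v)_j`
is exactly the symmetry condition `v(2n+1-i) = 2n+1 - v(i)` at `i = n+1-j`.
-/

open Finset

section permVal1

variable {m : ℕ} (v : Equiv.Perm (Fin m))

lemma permVal1_of_mem {k : ℕ} (hk : k ∈ Set.Icc 1 m) :
    permVal1 v k = (v ⟨k - 1, by grind⟩).val + 1 := by
  simp only [Set.mem_Icc] at hk
  exact dif_pos ⟨hk.1, hk.2⟩

lemma permVal1_mem_Icc {k : ℕ} (hk : k ∈ Set.Icc 1 m) : permVal1 v k ∈ Icc 1 m := by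
  rw [permVal1_of_mem v hk, mem_Icc]
  have := (v ⟨k - 1, by grind⟩).isLt
  omega

lemma permVal1_injOn : Set.InjOn (permVal1 v) (Set.Icc 1 m) := by
  intro k hk l hl h
  rw [permVal1_of_mem v hk, permVal1_of_mem v hl, add_left_inj, Fin.val_inj,
    v.injective.eq_iff, Fin.mk.injEq] at h
  grind

lemma image_permVal1_Icc : (Icc 1 m).image (permVal1 v) = Icc 1 m :=
  eq_of_subset_of_card_le
    (image_subset_iff.2 fun _ hk => permVal1_mem_Icc v (by simpa using hk))
    (card_image_of_injOn (by simpa using permVal1_injOn v)).ge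

lemma card_filter_permVal1_le {a : ℕ} (ha : a ≤ m) :
    #{k ∈ Icc 1 m | permVal1 v k ≤ a} = a := by
  have hinj : Set.InjOn (permVal1 v) ↑({k ∈ Icc 1 m | permVal1 v k ≤ a} : Finset ℕ) :=
    (permVal1_injOn v).mono fun k hk => by simpa using (mem_filter.1 hk).1
  rw [← card_image_of_injOn hinj, ← filter_image (p := (· ≤ a)), image_permVal1_Icc]
  have : {x ∈ Icc 1 m | x ≤ a} = Icc 1 a := by ext; simp only [mem_filter, mem_Icc]; omega
  simp [this]

end permVal1

section StrictMonoOn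

variable {α : Type*} [LinearOrder α] {f : ℕ → α} {a b : ℕ}

lemma StrictMonoOn.filter_le_eq_Icc (hf : StrictMonoOn f (Set.Icc a b)) {c : ℕ}
    (hc : c ∈ Set.Icc a b) : {x ∈ Icc a b | f x ≤ f c} = Icc a c := by
  ext x
  simp only [mem_filter, mem_Icc]
  constructor
  · rintro ⟨hx, hfx⟩
    exact ⟨hx.1, (hf.le_iff_le hx hc).1 hfx⟩
  · rintro ⟨hax, hxc⟩
    have hx : x ∈ Set.Icc a b := ⟨hax, hxc.trans hc.2⟩
    exact ⟨hx, (hf.le_iff_le hx hc).2 hxc⟩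

lemma StrictMonoOn.le_iff_lt_add_card_filter (hf : StrictMonoOn f (Set.Icc a b)) {x : ℕ}
    (hx : x ∈ Set.Icc a b) (y : α) : f x ≤ y ↔ x < a + #{z ∈ Icc a b | f z ≤ y} := by
  obtain ⟨hax, hxb⟩ := hx
  constructor
  · intro hfx
    have : Icc a x ⊆ {z ∈ Icc a b | f z ≤ y} := fun z hz => by
      rw [mem_Icc] at hz
      have hz' : z ∈ Set.Icc a b := ⟨hz.1, hz.2.trans hxb⟩
      exact mem_filter.2 ⟨mem_Icc.2 hz', ((hf.le_iff_le hz' ⟨hax, hxb⟩).2 hz.2).trans hfx⟩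
    have := card_le_card this
    rw [Nat.card_Icc] at this
    omega
  · intro hcard
    by_contra! hyx
    have : {z ∈ Icc a b | f z ≤ y} ⊆ Ico a x := fun z hz => by
      obtain ⟨hz, hfz⟩ := mem_filter.1 hz
      rw [mem_Icc] at hz
      exact mem_Ico.2 ⟨hz.1, (hf.lt_iff_lt hz ⟨hax, hxb⟩).1 (hfz.trans_lt hyx)⟩
    have := card_le_card this
    rw [Nat.card_Ico] at this
    omega

end StrictMonoOn

lemma card_filter_Icc_rev (n : ℕ) (p : ℕ → Prop) [DecidablePred p] :
    #{i ∈ Icc 1 n | p (n + 1 - i)} = #{i ∈ Icc 1 n | p i} := by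
  refine card_nbij' (fun i => n + 1 - i) (fun i => n + 1 - i) ?_ ?_ ?_ ?_ <;>
    intro i hi <;> simp only [coe_filter, Set.mem_ofPred_eq, mem_Icc] at hi ⊢
  · exact ⟨by omega, hi.2⟩
  · exact ⟨by omega, by rw [show n + 1 - (n + 1 - i) = i by omega]; exact hi.2⟩
  · omega
  · omega

lemma card_filter_Icc_split {d m : ℕ} (hdm : d ≤ m) (p : ℕ → Prop) [DecidablePred p] :
    #{k ∈ Icc 1 m | p k} = #{k ∈ Icc 1 d | p k} + #{k ∈ Icc (d + 1) m | p k} := by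
  have hunion : Icc 1 m = Icc 1 d ∪ Icc (d + 1) m := by
    ext x; simp only [mem_union, mem_Icc]; omega
  have hdisj : Disjoint (Icc 1 d) (Icc (d + 1) m) :=
    disjoint_left.2 fun x hx hx' => by rw [mem_Icc] at hx hx'; omega
  rw [hunion, filter_union, card_union_of_disjoint (disjoint_filter_filter hdisj)]

lemma card_filter_permVal1_le_split {m d : ℕ} (v : Equiv.Perm (Fin m)) (hdm : d ≤ m) {a : ℕ}
    (ha : a ≤ m) :
    #{k ∈ Icc 1 d | permVal1 v k ≤ a} + #{k ∈ Icc (d + 1) m | permVal1 v k ≤ a} = a := by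
  rw [← card_filter_Icc_split hdm, card_filter_permVal1_le v ha]

namespace IsGrassmannian

variable {m d : ℕ} {v : Equiv.Perm (Fin m)}

lemma strictMonoOn_left (hv : IsGrassmannian d v) :
    StrictMonoOn (permVal1 v) (Set.Icc 1 d) :=
  fun i hi _ hj hij => hv.1 i _ hi.1 hij hj.2

lemma strictMonoOn_right (hv : IsGrassmannian d v) :
    StrictMonoOn (permVal1 v) (Set.Icc (d + 1) m) :=
  fun i hi _ hj hij => hv.2 i _ hi.1 hij hj.2

lemma permVal1_left_eq (hv : IsGrassmannian d v) (hdm : d ≤ m) {k : ℕ}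
    (hk : k ∈ Set.Icc 1 d) :
    permVal1 v k = k + #{z ∈ Icc (d + 1) m | permVal1 v z ≤ permVal1 v k} := by
  have hkm : k ∈ Set.Icc 1 m := ⟨hk.1, hk.2.trans hdm⟩
  have := card_filter_permVal1_le_split v hdm (mem_Icc.1 (permVal1_mem_Icc v hkm)).2
  rw [hv.strictMonoOn_left.filter_le_eq_Icc hk, Nat.card_Icc] at this
  omega

lemma permVal1_right_eq (hv : IsGrassmannian d v) {j : ℕ} (hj : 1 ≤ j) (hdj : d + j ≤ m) :
    permVal1 v (d + j) = j + #{z ∈ Icc 1 d | permVal1 v z ≤ permVal1 v (d + j)} := by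
  have hjm : d + j ∈ Set.Icc 1 m := ⟨by omega, hdj⟩
  have := card_filter_permVal1_le_split v (by omega : d ≤ m)
    (mem_Icc.1 (permVal1_mem_Icc v hjm)).2
  rw [hv.strictMonoOn_right.filter_le_eq_Icc ⟨by omega, hdj⟩, Nat.card_Icc] at this
  omega

lemma le_permVal1 (hv : IsGrassmannian d v) (hdm : d ≤ m) {k : ℕ} (hk : k ∈ Set.Icc 1 d) :
    k ≤ permVal1 v k := by
  rw [hv.permVal1_left_eq hdm hk]
  exact Nat.le_add_right _ _

lemma permVal1_add_le (hv : IsGrassmannian d v) {j : ℕ} (hj : 1 ≤ j) (hdj : d + j ≤ m) :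
    permVal1 v (d + j) ≤ d + j := by
  have := card_le_card (filter_subset (fun z => permVal1 v z ≤ permVal1 v (d + j)) (Icc 1 d))
  rw [Nat.card_Icc] at this
  rw [hv.permVal1_right_eq hj hdj]
  omega

lemma permVal1_add_lt_iff (hv : IsGrassmannian d v) {k j : ℕ} (hk : k ∈ Set.Icc 1 d)
    (hj : 1 ≤ j) (hdj : d + j ≤ m) :
    permVal1 v (d + j) < permVal1 v k ↔ k + j ≤ permVal1 v k := by
  have hdm : d ≤ m := by omega
  have hne : permVal1 v (d + j) ≠ permVal1 v k := fun h =>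
    absurd ((permVal1_injOn v) ⟨by omega, hdj⟩ ⟨hk.1, hk.2.trans hdm⟩ h) (by grind)
  have hcount := hv.permVal1_left_eq hdm hk
  rw [← hne.le_iff_lt, hv.strictMonoOn_right.le_iff_lt_add_card_filter ⟨by omega, hdj⟩]
  omega

lemma card_filter_add_le_permVal1 (hv : IsGrassmannian d v) {j : ℕ} (hj : 1 ≤ j)
    (hdj : d + j ≤ m) :
    #{k ∈ Icc 1 d | k + j ≤ permVal1 v k} = d + j - permVal1 v (d + j) := by
  have hfilter : {k ∈ Icc 1 d | k + j ≤ permVal1 v k}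
      = {k ∈ Icc 1 d | ¬permVal1 v k ≤ permVal1 v (d + j)} :=
    filter_congr fun k hk => by
      rw [not_le, hv.permVal1_add_lt_iff (by simpa using hk) hj hdj]
  have hsplit := card_filter_add_card_filter_not (s := Icc 1 d)
    (fun k => permVal1 v k ≤ permVal1 v (d + j))
  have hright := hv.permVal1_right_eq hj hdj
  rw [Nat.card_Icc] at hsplit
  rw [hfilter]
  omega

end IsGrassmannian

theorem stmt_7_general (n : ℕ) (v : Equiv.Perm (Fin (2 * n)))
    (hv : IsGrassmannian n v) :
    (∀ i : ℕ, 1 ≤ i → i ≤ n →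
        permVal1 v (2 * n + 1 - i) = 2 * n + 1 - permVal1 v i)
    ↔ (∀ j : ℕ, 1 ≤ j → j ≤ n →
        ((Finset.Icc 1 n).filter
            (fun i => (n + 1 - i) + j ≤ permVal1 v (n + 1 - i))).card
          = permVal1 v (n + 1 - j) - (n + 1 - j)) := by
  have htranspose : ∀ j, 1 ≤ j → j ≤ n →
      #{i ∈ Icc 1 n | (n + 1 - i) + j ≤ permVal1 v (n + 1 - i)} = n + j - permVal1 v (n + j) :=
    fun j hj hjn => by
      rw [card_filter_Icc_rev n (fun k => k + j ≤ permVal1 v k)]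
      exact hv.card_filter_add_le_permVal1 hj (by omega)
  constructor
  · intro hsym j hj hjn
    have h := hsym (n + 1 - j) (by omega) (by omega)
    rw [show 2 * n + 1 - (n + 1 - j) = n + j by omega] at h
    have hlow := hv.le_permVal1 (by omega) (k := n + 1 - j) ⟨by omega, by omega⟩
    have hup := mem_Icc.1 (permVal1_mem_Icc v (k := n + 1 - j) ⟨by omega, by omega⟩)
    rw [htranspose j hj hjn]
    omega
  · intro hpart i hi hin
    have h := hpart (n + 1 - i) (by omega) (by omega)
    have hup := hv.permVal1_add_le (j := n + 1 - i) (by omega) (by omega)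
    rw [htranspose _ (by omega) (by omega), show n + 1 - (n + 1 - i) = i by omega] at h
    rw [show n + (n + 1 - i) = 2 * n + 1 - i by omega] at h hup
    have hlow := hv.le_permVal1 (by omega) ⟨hi, hin⟩
    omega

/-- An `n`-Grassmannian permutation `v ∈ S_{2n}` is symmetric
(`v(2n+1−i) = 2n+1−v(i)` for `i = 1,…,n`) if and only if its associated partition `λ_v`
is symmetric (`(λ_v)ᵗ = λ_v`, i.e. `#{i : (λ_v)ᵢ ≥ j} = (λ_v)_j` for `j = 1,…,n`,
where `(λ_v)ᵢ = v(n+1−i) − (n+1−i)`). -/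
theorem stmt_7 (n : ℕ) (hn : 1 ≤ n) (v : Equiv.Perm (Fin (2 * n)))
    (hv : IsGrassmannian n v) :
    (∀ i : ℕ, 1 ≤ i → i ≤ n →
        permVal1 v (2 * n + 1 - i) = 2 * n + 1 - permVal1 v i)
    ↔ (∀ j : ℕ, 1 ≤ j → j ≤ n →
        ((Finset.Icc 1 n).filter
            (fun i => (n + 1 - i) + j ≤ permVal1 v (n + 1 - i))).card
          = permVal1 v (n + 1 - j) - (n + 1 - j)) :=
  stmt_7_general n v hv
end

section
/- Fix integers 0 < d < n and a partition μ with at most d parts, each at most n−d. Order the boxes of D_μ by (i,j) < (k,l) iff i > k, or i = k and j > l. Let α' < α be two boxes of D_μ lying on the same diagonal k (a box (i,j) lies on diagonal j−i), and let C ⊆ D_μ satisfy: α ∈ C, α' ∉ C, and C contains no box β with α' < β < α lying on diagonal k−1, k, or k+1. Then the Demazure products (in S_n, with respect to the adjacent transpositions) of the words s_{C∖{α}∪{α'}}, s_{C∪{α'}}, and s_C are all equal. -/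
/-- The adjacent transposition `s_k = (k, k+1)` of `{1, …, n}` (1-indexed); identity if out of range. -/
def adjT (n k : ℕ) : Equiv.Perm (Fin n) :=
  if h : 1 ≤ k ∧ k < n then Equiv.swap ⟨k - 1, by omega⟩ ⟨k, by omega⟩ else 1

/-- The boxes of the Young diagram `D_μ` (with at most `d` rows), listed in reading order:
rows from bottom to top, each row from right to left. -/
def boxWord (d : ℕ) (μ : ℕ → ℕ) : List (ℕ × ℕ) :=
  ((List.range d).reverse).flatMap
    (fun i0 => ((List.range (μ (i0 + 1))).reverse).map (fun j0 => (i0 + 1, j0 + 1)))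

/-- The reading word of the reflection-valued tableau `T_μ`: the box `(i,j)` contributes
the letter `d + j − i`. -/
def readingWord (d : ℕ) (μ : ℕ → ℕ) : List ℕ :=
  (boxWord d μ).map (fun b => d + b.2 - b.1)

/-- `μ` is a partition with at most `d` parts, each of size at most `c`
(given as a function on 1-indexed part numbers). -/
def IsPartitionBounded (d c : ℕ) (μ : ℕ → ℕ) : Prop :=
  (∀ i j : ℕ, 1 ≤ i → i ≤ j → μ j ≤ μ i) ∧ (∀ i : ℕ, d < i → μ i = 0) ∧ μ 1 ≤ c

/-- The associated partition of the `d`-Grassmannian permutation `v` is `μ`: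
`(λ_v)ᵢ = v(d+1−i) − (d+1−i) = μ i` for `i = 1, …, d`. -/
def hasShape {n : ℕ} (d : ℕ) (v : Equiv.Perm (Fin n)) (μ : ℕ → ℕ) : Prop :=
  ∀ i : ℕ, 1 ≤ i → i ≤ d → permVal1 v (d + 1 - i) = (d + 1 - i) + μ i

/-- The inversion number of a permutation (its Coxeter length in `Sₙ`). -/
def invCount {n : ℕ} (w : Equiv.Perm (Fin n)) : ℕ := (invPairs w).card

/-- The Demazure product in `Sₙ` of a word of adjacent transpositions,
given by 1-indexed letters. -/
def demProdA (n : ℕ) : List ℕ → Equiv.Perm (Fin n)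
  | [] => 1
  | k :: t =>
      if invCount (adjT n k * demProdA n t) > invCount (demProdA n t)
      then adjT n k * demProdA n t
      else demProdA n t

/-- The box `b` lies in the Young diagram `D_μ` (with at most `d` rows). -/
def inDP (d : ℕ) (μ : ℕ → ℕ) (b : ℕ × ℕ) : Prop :=
  1 ≤ b.1 ∧ b.1 ≤ d ∧ 1 ≤ b.2 ∧ b.2 ≤ μ b.1

/-- The order on boxes: `(i,j) < (k,l)` iff `i > k`, or `i = k` and `j > l`.
`boxLt a b` means `a < b`. -/
def boxLt (a b : ℕ × ℕ) : Prop := b.1 < a.1 ∨ (a.1 = b.1 ∧ b.2 < a.2)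

/-- The diagonal of a box: `j − i`. -/
def diag (b : ℕ × ℕ) : ℤ := (b.2 : ℤ) - (b.1 : ℤ)

/-- The word `s_C`: the subword of the reading word of `T_μ` consisting of the letters
lying in boxes of `C`. -/
def subwordOf (d : ℕ) (μ : ℕ → ℕ) (C : Finset (ℕ × ℕ)) : List ℕ :=
  ((boxWord d μ).filter (fun b => decide (b ∈ C))).map (fun b => d + b.2 - b.1)

/-! Boxes on one diagonal carry the same letter `k`, and in the reading word the boxes strictly
between `α'` and `α` form a contiguous block. The letters of `C` in that block differ from `k` by at
least two, so their Demazure steps commute with that of `k`: moving `k` across the block turns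
`s_{C∖{α}∪{α'}}` into `s_C`, and `s_{C∪{α'}}` into a word with a factor `k k`, which the Demazure
product collapses to `k` because the Demazure step is idempotent. -/

section Inversions

variable {n : ℕ}

lemma permVal1_eq {v : Equiv.Perm (Fin n)} {k : ℕ} (m : Fin n) (hm : (m : ℕ) + 1 = k) :
    permVal1 v k = (v m : ℕ) + 1 := by
  subst hm
  rw [permVal1, dif_pos ⟨by omega, m.isLt⟩]
  rfl

def invFin (v : Equiv.Perm (Fin n)) : Finset (Fin n × Fin n) :=
  Finset.univ.filter fun p => p.1 < p.2 ∧ v p.2 < v p.1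

lemma invCount_eq_card_invFin (v : Equiv.Perm (Fin n)) : invCount v = (invFin v).card := by
  have himage : invPairs v = (invFin v).image fun p => ((p.1 : ℕ) + 1, (p.2 : ℕ) + 1) := by
    ext ⟨i, j⟩
    simp only [invPairs, invFin, Finset.mem_filter, Finset.mem_product, Finset.mem_Icc,
      Finset.mem_image, Finset.mem_univ, true_and, Prod.mk.injEq, Prod.exists]
    constructor
    · rintro ⟨⟨⟨hi1, hi2⟩, hj1, hj2⟩, hij, hv⟩
      rw [permVal1_eq ⟨j - 1, by omega⟩ (Nat.sub_add_cancel hj1),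
        permVal1_eq ⟨i - 1, by omega⟩ (Nat.sub_add_cancel hi1)] at hv
      exact ⟨⟨i - 1, by omega⟩, ⟨j - 1, by omega⟩, ⟨Fin.mk_lt_mk.mpr (by omega), Fin.lt_def.mpr (by omega)⟩,
        Nat.sub_add_cancel hi1, Nat.sub_add_cancel hj1⟩
    · rintro ⟨p, q, ⟨hpq, hv⟩, rfl, rfl⟩
      rw [permVal1_eq q rfl, permVal1_eq p rfl]
      rw [Fin.lt_def] at hpq hv
      omega
  rw [invCount, himage, Finset.card_image_of_injective]
  intro p q h
  simp only [Prod.mk.injEq, add_left_inj] at h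
  exact Prod.ext (Fin.ext h.1) (Fin.ext h.2)

lemma invFin_swap_mul_of_lt {u u' : Fin n} (h : (u' : ℕ) = u + 1) {x : Equiv.Perm (Fin n)}
    (hx : x⁻¹ u < x⁻¹ u') :
    invFin (Equiv.swap u u' * x) = insert (x⁻¹ u, x⁻¹ u') (invFin x) := by
  ext ⟨i, j⟩
  simp only [invFin, Finset.mem_filter, Finset.mem_univ, true_and]
  simp only [Finset.mem_insert, Finset.mem_filter, Finset.mem_univ, true_and, Prod.mk.injEq,
    Equiv.Perm.mul_apply, Equiv.swap_apply_def]
  have hiu : i = x⁻¹ u ↔ x i = u := Equiv.Perm.eq_inv_iff_eq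
  have hiu' : i = x⁻¹ u' ↔ x i = u' := Equiv.Perm.eq_inv_iff_eq
  have hju : j = x⁻¹ u ↔ x j = u := Equiv.Perm.eq_inv_iff_eq
  have hju' : j = x⁻¹ u' ↔ x j = u' := Equiv.Perm.eq_inv_iff_eq
  have hinj : x i = x j ↔ i = j := x.injective.eq_iff
  split_ifs <;> simp only [Fin.lt_def, Fin.ext_iff] at * <;> omega

lemma invCount_lt_invCount_swap_mul_iff {u u' : Fin n} (h : (u' : ℕ) = u + 1)
    (x : Equiv.Perm (Fin n)) :
    invCount x < invCount (Equiv.swap u u' * x) ↔ x⁻¹ u < x⁻¹ u' := by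
  have hsucc : ∀ y : Equiv.Perm (Fin n), y⁻¹ u < y⁻¹ u' →
      invCount (Equiv.swap u u' * y) = invCount y + 1 := fun y hy => by
    rw [invCount_eq_card_invFin, invCount_eq_card_invFin, invFin_swap_mul_of_lt h hy,
      Finset.card_insert_of_notMem]
    simp only [invFin, Finset.mem_filter, Finset.mem_univ, true_and, Equiv.Perm.inv_def,
      Equiv.apply_symm_apply, Fin.lt_def]
    omega
  rcases lt_trichotomy (x⁻¹ u) (x⁻¹ u') with hlt | heq | hgt
  · exact iff_of_true (by rw [hsucc x hlt]; omega) hlt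
  · exact absurd (x⁻¹.injective heq) (fun e => by simp [e] at h)
  · have hback := hsucc (Equiv.swap u u' * x) (by simpa [mul_inv_rev, Equiv.swap_inv] using hgt)
    rw [← mul_assoc, Equiv.swap_mul_self, one_mul] at hback
    simp only [hback, hgt.not_gt, iff_false, not_lt]
    omega

end Inversions

section Demazure

variable {n : ℕ}

lemma adjT_eq_one {k : ℕ} (hk : ¬(1 ≤ k ∧ k < n)) : adjT n k = 1 := dif_neg hk

lemma adjT_mul_self (k : ℕ) : adjT n k * adjT n k = 1 := by
  unfold adjT
  split_ifs
  exacts [Equiv.swap_mul_self _ _, one_mul 1]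

lemma adjT_inv (k : ℕ) : (adjT n k)⁻¹ = adjT n k :=
  inv_eq_of_mul_eq_one_left (adjT_mul_self k)

lemma adjT_apply_of_ne {k : ℕ} {m : Fin n} (h1 : (m : ℕ) + 1 ≠ k) (h2 : (m : ℕ) ≠ k) :
    adjT n k m = m := by
  unfold adjT
  split_ifs
  · exact Equiv.swap_apply_of_ne_of_ne (Fin.ne_of_val_ne (by dsimp only; omega))
      (Fin.ne_of_val_ne (by dsimp only; omega))
  · rfl

lemma adjT_commute {a b : ℕ} (hab : a + 2 ≤ b ∨ b + 2 ≤ a) :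
    Commute (adjT n a) (adjT n b) := by
  refine Equiv.Perm.Disjoint.commute fun m => ?_
  by_cases hm : (m : ℕ) + 1 = a ∨ (m : ℕ) = a
  · exact Or.inr (adjT_apply_of_ne (by omega) (by omega))
  · exact Or.inl (adjT_apply_of_ne (by omega) (by omega))

lemma invCount_lt_invCount_adjT_mul_iff {k : ℕ} (hk1 : 1 ≤ k) (hk2 : k < n)
    (x : Equiv.Perm (Fin n)) :
    invCount x < invCount (adjT n k * x) ↔ x⁻¹ ⟨k - 1, by omega⟩ < x⁻¹ ⟨k, hk2⟩ := by
  rw [adjT, dif_pos ⟨hk1, hk2⟩]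
  exact invCount_lt_invCount_swap_mul_iff (show k = k - 1 + 1 by omega) x

/-- Whether `s_a` is a left ascent of `x` only depends on the positions of the values `a`, `a + 1`
in `x`, which `s_b` does not move. -/
lemma invCount_lt_invCount_adjT_mul_adjT_mul_iff {a b : ℕ} (hab : a + 2 ≤ b ∨ b + 2 ≤ a)
    (x : Equiv.Perm (Fin n)) :
    invCount (adjT n b * x) < invCount (adjT n a * (adjT n b * x)) ↔
      invCount x < invCount (adjT n a * x) := by
  by_cases ha : 1 ≤ a ∧ a < n
  · rw [invCount_lt_invCount_adjT_mul_iff ha.1 ha.2, invCount_lt_invCount_adjT_mul_iff ha.1 ha.2,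
      mul_inv_rev, adjT_inv, Equiv.Perm.mul_apply, Equiv.Perm.mul_apply,
      adjT_apply_of_ne (by dsimp only; omega) (by dsimp only; omega),
      adjT_apply_of_ne (by dsimp only; omega) (by dsimp only; omega)]
  · simp only [adjT_eq_one ha, one_mul, lt_irrefl]

def demStep (n k : ℕ) (w : Equiv.Perm (Fin n)) : Equiv.Perm (Fin n) :=
  if invCount (adjT n k * w) > invCount w then adjT n k * w else w

lemma demProdA_cons (k : ℕ) (t : List ℕ) : demProdA n (k :: t) = demStep n k (demProdA n t) :=
  rfl

lemma demStep_of_lt {k : ℕ} {w : Equiv.Perm (Fin n)} (h : invCount w < invCount (adjT n k * w)) :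
    demStep n k w = adjT n k * w :=
  if_pos h

lemma demStep_of_not_lt {k : ℕ} {w : Equiv.Perm (Fin n)}
    (h : ¬invCount w < invCount (adjT n k * w)) : demStep n k w = w :=
  if_neg h

lemma demStep_idem (k : ℕ) (w : Equiv.Perm (Fin n)) :
    demStep n k (demStep n k w) = demStep n k w := by
  by_cases h : invCount w < invCount (adjT n k * w)
  · rw [demStep_of_lt h]
    refine demStep_of_not_lt ?_
    rw [← mul_assoc, adjT_mul_self, one_mul]
    exact h.not_gt
  · rw [demStep_of_not_lt h, demStep_of_not_lt h]

lemma demStep_comm {a b : ℕ} (hab : a + 2 ≤ b ∨ b + 2 ≤ a) (w : Equiv.Perm (Fin n)) :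
    demStep n a (demStep n b w) = demStep n b (demStep n a w) := by
  have hba : b + 2 ≤ a ∨ a + 2 ≤ b := hab.symm
  have ha := invCount_lt_invCount_adjT_mul_adjT_mul_iff (n := n) hab w
  have hb := invCount_lt_invCount_adjT_mul_adjT_mul_iff (n := n) hba w
  by_cases hwa : invCount w < invCount (adjT n a * w) <;>
    by_cases hwb : invCount w < invCount (adjT n b * w)
  · rw [demStep_of_lt hwb, demStep_of_lt hwa, demStep_of_lt (ha.mpr hwa), demStep_of_lt (hb.mpr hwb),
      ← mul_assoc, ← mul_assoc, (adjT_commute hab).eq]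
  · rw [demStep_of_not_lt hwb, demStep_of_lt hwa, demStep_of_not_lt (mt hb.mp hwb)]
  · rw [demStep_of_lt hwb, demStep_of_not_lt hwa, demStep_of_not_lt (mt ha.mp hwa),
      demStep_of_lt hwb]
  · rw [demStep_of_not_lt hwb, demStep_of_not_lt hwa, demStep_of_not_lt hwb]

lemma demProdA_append_congr (u : List ℕ) {t₁ t₂ : List ℕ} (h : demProdA n t₁ = demProdA n t₂) :
    demProdA n (u ++ t₁) = demProdA n (u ++ t₂) := by
  induction u with
  | nil => exact h
  | cons c u ih => simp only [List.cons_append, demProdA_cons, ih]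

lemma demProdA_cons_append_of_far {k : ℕ} {P : List ℕ} (hP : ∀ b ∈ P, k + 2 ≤ b ∨ b + 2 ≤ k)
    (t : List ℕ) : demProdA n (k :: (P ++ t)) = demProdA n (P ++ k :: t) := by
  induction P with
  | nil => rfl
  | cons c P ih =>
    have hc := hP c List.mem_cons_self
    rw [List.cons_append, List.cons_append, demProdA_cons, demProdA_cons, demStep_comm hc,
      ← demProdA_cons, ih fun b hb => hP b (List.mem_cons_of_mem c hb), demProdA_cons]

lemma demProdA_cons_append_cons_of_far {k : ℕ} {P : List ℕ} (hP : ∀ b ∈ P, k + 2 ≤ b ∨ b + 2 ≤ k)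
    (t : List ℕ) : demProdA n (k :: (P ++ k :: t)) = demProdA n (P ++ k :: t) := by
  rw [demProdA_cons_append_of_far hP]
  refine demProdA_append_congr P ?_
  rw [demProdA_cons, demProdA_cons, demStep_idem]

end Demazure

section Filter

variable {α : Type*} [DecidableEq α] {l : List α} {S : Finset α} {a : α}

lemma List.filter_mem_insert_of_notMem (ha : a ∉ l) :
    l.filter (· ∈ insert a S) = l.filter (· ∈ S) :=
  List.filter_congr fun x hx => by
    simp only [Finset.mem_insert, ne_of_mem_of_not_mem hx ha, false_or]

lemma List.filter_mem_erase_of_notMem (ha : a ∉ l) :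
    l.filter (· ∈ S.erase a) = l.filter (· ∈ S) :=
  List.filter_congr fun x hx => by
    simp only [Finset.mem_erase, ne_of_mem_of_not_mem hx ha, ne_eq, not_false_eq_true, true_and]

end Filter

section Boxes

def boxLetter (d : ℕ) (b : ℕ × ℕ) : ℕ := d + b.2 - b.1

def lettersIn (d : ℕ) (C : Finset (ℕ × ℕ)) (l : List (ℕ × ℕ)) : List ℕ :=
  (l.filter (· ∈ C)).map (boxLetter d)

lemma cast_boxLetter {d : ℕ} {b : ℕ × ℕ} (hb : b.1 ≤ d) : (boxLetter d b : ℤ) = d + diag b := by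
  unfold boxLetter diag
  omega

lemma boxLetter_eq_of_diag_eq {d : ℕ} {b c : ℕ × ℕ} (hb : b.1 ≤ d) (hc : c.1 ≤ d)
    (h : diag b = diag c) : boxLetter d b = boxLetter d c := by
  have := cast_boxLetter hb
  have := cast_boxLetter hc
  omega

lemma boxLetter_far_of_diag {d : ℕ} {b c : ℕ × ℕ} (hb : b.1 ≤ d) (hc : c.1 ≤ d)
    (h : diag b ≠ diag c - 1 ∧ diag b ≠ diag c ∧ diag b ≠ diag c + 1) :
    boxLetter d c + 2 ≤ boxLetter d b ∨ boxLetter d b + 2 ≤ boxLetter d c := by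
  have := cast_boxLetter hb
  have := cast_boxLetter hc
  omega

lemma boxLt_irrefl (b : ℕ × ℕ) : ¬boxLt b b := by
  unfold boxLt
  omega

lemma boxLt_asymm {a b : ℕ × ℕ} (h : boxLt a b) : ¬boxLt b a := by
  unfold boxLt at *
  omega

lemma mem_boxWord_iff {d : ℕ} {μ : ℕ → ℕ} {b : ℕ × ℕ} : b ∈ boxWord d μ ↔ inDP d μ b := by
  obtain ⟨i, j⟩ := b
  simp only [boxWord, inDP, List.mem_flatMap, List.mem_reverse, List.mem_range, List.mem_map,
    Prod.mk.injEq]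
  constructor
  · rintro ⟨i0, hi0, j0, hj0, rfl, rfl⟩
    omega
  · rintro ⟨hi1, hid, hj1, hjμ⟩
    exact ⟨i - 1, by omega, j - 1, by rw [Nat.sub_add_cancel hi1]; omega, by omega, by omega⟩

lemma boxWord_pairwise (d : ℕ) (μ : ℕ → ℕ) : (boxWord d μ).Pairwise boxLt := by
  rw [boxWord, List.pairwise_flatMap, List.pairwise_reverse]
  refine ⟨fun i0 _ => ?_, List.pairwise_lt_range.imp fun hlt p hp q hq => ?_⟩
  · rw [List.pairwise_map, List.pairwise_reverse]
    exact List.pairwise_lt_range.imp fun h => Or.inr ⟨rfl, by omega⟩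
  · simp only [List.mem_map, List.mem_reverse, List.mem_range] at hp hq
    obtain ⟨_, _, rfl⟩ := hp
    obtain ⟨_, _, rfl⟩ := hq
    exact Or.inl (by omega)

lemma boxWord_nodup (d : ℕ) (μ : ℕ → ℕ) : (boxWord d μ).Nodup :=
  (boxWord_pairwise d μ).imp fun {b _} h => by rintro rfl; exact boxLt_irrefl b h

lemma exists_boxWord_eq_append {d : ℕ} {μ : ℕ → ℕ} {α α' : ℕ × ℕ} (hα : inDP d μ α)
    (hα' : inDP d μ α') (hlt : boxLt α' α) :
    ∃ A B E, boxWord d μ = A ++ α' :: (B ++ α :: E) ∧ ∀ β ∈ B, boxLt α' β ∧ boxLt β α := by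
  have hsorted := boxWord_pairwise d μ
  obtain ⟨A, T, hAT⟩ := List.append_of_mem (mem_boxWord_iff.mpr hα')
  rw [hAT, List.pairwise_append, List.pairwise_cons] at hsorted
  have hαT : α ∈ T := by
    rcases List.mem_append.mp (hAT ▸ mem_boxWord_iff.mpr hα) with hA | hT
    · exact absurd (hsorted.2.2 α hA α' List.mem_cons_self) (boxLt_asymm hlt)
    · exact (List.mem_cons.mp hT).resolve_left fun e => boxLt_irrefl α (e ▸ hlt)
  obtain ⟨B, E, rfl⟩ := List.append_of_mem hαT
  refine ⟨A, B, E, hAT, fun β hβ => ⟨hsorted.2.1.1 β (List.mem_append_left _ hβ), ?_⟩⟩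
  exact (List.pairwise_append.mp hsorted.2.1.2).2.2 β hβ α List.mem_cons_self

lemma subwordOf_eq_of_boxWord_eq {d : ℕ} {μ : ℕ → ℕ} {C : Finset (ℕ × ℕ)} {α α' : ℕ × ℕ}
    {A B E : List (ℕ × ℕ)} (hsplit : boxWord d μ = A ++ α' :: (B ++ α :: E)) (hmem : α ∈ C)
    (hmem' : α' ∉ C) :
    subwordOf d μ C = lettersIn d C A ++ (lettersIn d C B ++ boxLetter d α :: lettersIn d C E) ∧
    subwordOf d μ (C ∪ {α'}) =
      lettersIn d C A ++ boxLetter d α' :: (lettersIn d C B ++ boxLetter d α :: lettersIn d C E) ∧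
    subwordOf d μ (C.erase α ∪ {α'}) =
      lettersIn d C A ++ boxLetter d α' :: (lettersIn d C B ++ lettersIn d C E) := by
  have hnd := boxWord_nodup d μ
  rw [hsplit, List.nodup_middle, ← List.append_assoc, List.nodup_cons, List.nodup_middle,
    List.nodup_cons] at hnd
  simp only [List.mem_append, List.mem_cons, not_or] at hnd
  obtain ⟨⟨⟨hα'A, hα'B⟩, hα'α, hα'E⟩, ⟨⟨hαA, hαB⟩, hαE⟩, -⟩ := hnd
  simp only [subwordOf, hsplit, Finset.union_singleton, List.filter_append, List.filter_cons,
    List.filter_mem_insert_of_notMem hα'A, List.filter_mem_insert_of_notMem hα'B,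
    List.filter_mem_insert_of_notMem hα'E, List.filter_mem_erase_of_notMem hαA,
    List.filter_mem_erase_of_notMem hαB, List.filter_mem_erase_of_notMem hαE]
  simp only [Finset.mem_insert_self, Finset.mem_insert, Finset.mem_erase, hmem, hmem',
    Ne.symm hα'α, decide_true, decide_false, ne_eq, not_true_eq_false, false_and, or_true, or_false,
    if_true, if_false, Bool.false_eq_true, List.map_append, List.map_cons]
  exact ⟨rfl, rfl, rfl⟩

end Boxes

theorem stmt_9_general (n d : ℕ) (μ : ℕ → ℕ)
    (C : Finset (ℕ × ℕ))
    (α α' : ℕ × ℕ) (hα : inDP d μ α) (hα' : inDP d μ α')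
    (hlt : boxLt α' α) (hdiag : diag α' = diag α)
    (hmem : α ∈ C) (hmem' : α' ∉ C)
    (hbetween : ∀ β ∈ C, boxLt α' β → boxLt β α →
      diag β ≠ diag α - 1 ∧ diag β ≠ diag α ∧ diag β ≠ diag α + 1) :
    demProdA n (subwordOf d μ ((C.erase α) ∪ {α'})) = demProdA n (subwordOf d μ C) ∧
    demProdA n (subwordOf d μ (C ∪ {α'})) = demProdA n (subwordOf d μ C) := by
  obtain ⟨A, B, E, hsplit, hB⟩ := exists_boxWord_eq_append hα hα' hlt
  have hletter : boxLetter d α' = boxLetter d α := boxLetter_eq_of_diag_eq hα'.2.1 hα.2.1 hdiag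
  have hfar : ∀ c ∈ lettersIn d C B, boxLetter d α + 2 ≤ c ∨ c + 2 ≤ boxLetter d α := by
    simp only [lettersIn, List.mem_map, List.mem_filter, decide_eq_true_eq]
    rintro _ ⟨β, ⟨hβB, hβC⟩, rfl⟩
    have hβ : β ∈ boxWord d μ := by simp [hsplit, hβB]
    exact boxLetter_far_of_diag (mem_boxWord_iff.mp hβ).2.1 hα.2.1
      (hbetween β hβC (hB β hβB).1 (hB β hβB).2)
  obtain ⟨hC, hCα', hCαα'⟩ := subwordOf_eq_of_boxWord_eq hsplit hmem hmem'
  rw [hC, hCα', hCαα', hletter]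
  exact ⟨demProdA_append_congr _ (demProdA_cons_append_of_far hfar _),
    demProdA_append_congr _ (demProdA_cons_append_cons_of_far hfar _)⟩

/-- Moving a box of `C` along its diagonal (or adding a box on the same diagonal), when no
box of `C` strictly between them lies on that diagonal or an adjacent one, does not change
the Demazure product of the word `s_C`. -/
theorem stmt_9 (n d : ℕ) (hd : 0 < d) (hdn : d < n) (μ : ℕ → ℕ)
    (hμ : IsPartitionBounded d (n - d) μ)
    (C : Finset (ℕ × ℕ)) (hC : ∀ b ∈ C, inDP d μ b)
    (α α' : ℕ × ℕ) (hα : inDP d μ α) (hα' : inDP d μ α')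
    (hlt : boxLt α' α) (hdiag : diag α' = diag α)
    (hmem : α ∈ C) (hmem' : α' ∉ C)
    (hbetween : ∀ β ∈ C, boxLt α' β → boxLt β α →
      diag β ≠ diag α - 1 ∧ diag β ≠ diag α ∧ diag β ≠ diag α + 1) :
    demProdA n (subwordOf d μ ((C.erase α) ∪ {α'})) = demProdA n (subwordOf d μ C) ∧
    demProdA n (subwordOf d μ (C ∪ {α'})) = demProdA n (subwordOf d μ C) :=
  stmt_9_general n d μ C α α' hα hα' hlt hdiag hmem hmem' hbetween
end

section
/- Fix integers 0 < d < n, let μ be a partition with at most d parts, each at most n−d, and let v be the d-Grassmannian permutation with λ_v = μ. Let (s_{i_1},…,s_{i_l}) be the reading word of T_μ (a reduced word for v, l = |μ|). For 1 ≤ c ≤ l, let σ = s_{i_1}s_{i_2}⋯s_{i_{c−1}} ∈ S_n and define r(c) = e_{σ(i_c)} − e_{σ(i_c+1)} ∈ ℤ^n (the image under σ, acting on ℤ^n by permuting coordinates, of the simple root e_{i_c} − e_{i_c+1}). If the c-th letter of the reading word lies in box (i,j) of D_μ, then r(c) = e_{v(d+j)} − e_{v(d+1−i)}. -/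
/-- The standard basis vector `e_m ∈ ℤⁿ` (1-indexed); zero if `m` is out of range. -/
def eVec (n m : ℕ) : Fin n → ℤ := fun t => if (t : ℕ) + 1 = m then 1 else 0

/-!
The prefix of the reading word before box `(i, j)` is the product of the descending runs
`s_{a+m-1} ⋯ s_a` of rows `d, …, i + 1`, followed by the part of row `i` right of `(i, j)`.
Such a run is the cycle sending `a` to `a + m` and lowering `a + 1, …, a + m` by one.
Tracing `d + j - i + 1` through these cycles, the partial row sends it to
`d + 1 - i + μ i = v(d + 1 - i)`, which the lower rows fix; tracing `d + j - i`, it is lowered once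
in each lower row `r` with `j ≤ μ r`, ending at `d + j - μ'_j` (`μ'` the conjugate partition),
and this is `v(d + j)` for the Grassmannian `v` of shape `μ`.
-/

section PermVal1

variable {n : ℕ}

lemma permVal1_of_mem_s11 (v : Equiv.Perm (Fin n)) {x : ℕ} (hx : 1 ≤ x ∧ x ≤ n) :
    permVal1 v x = (v ⟨x - 1, by omega⟩).val + 1 :=
  dif_pos hx

lemma permVal1_mem (v : Equiv.Perm (Fin n)) {x : ℕ} (hx : 1 ≤ x ∧ x ≤ n) :
    1 ≤ permVal1 v x ∧ permVal1 v x ≤ n := by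
  rw [permVal1_of_mem_s11 v hx]
  have := (v ⟨x - 1, by omega⟩).isLt
  omega

lemma permVal1_one {x : ℕ} (hx : 1 ≤ x ∧ x ≤ n) :
    permVal1 (1 : Equiv.Perm (Fin n)) x = x := by
  rw [permVal1_of_mem_s11 _ hx]
  exact Nat.sub_add_cancel hx.1

lemma permVal1_mul (σ τ : Equiv.Perm (Fin n)) {x : ℕ} (hx : 1 ≤ x ∧ x ≤ n) :
    permVal1 (σ * τ) x = permVal1 σ (permVal1 τ x) := by
  have hτx := permVal1_mem τ hx
  rw [permVal1_of_mem_s11 τ hx] at hτx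
  rw [permVal1_of_mem_s11 _ hx, permVal1_of_mem_s11 τ hx, permVal1_of_mem_s11 σ hτx]
  simp

lemma permVal1_inj (v : Equiv.Perm (Fin n)) {x y : ℕ} (hx : 1 ≤ x ∧ x ≤ n)
    (hy : 1 ≤ y ∧ y ≤ n) : permVal1 v x = permVal1 v y ↔ x = y := by
  rw [permVal1_of_mem_s11 v hx, permVal1_of_mem_s11 v hy, add_left_inj, Fin.val_inj, v.apply_eq_iff_eq,
    Fin.mk.injEq]
  omega

lemma permVal1_adjT {k x : ℕ} (hk : 1 ≤ k ∧ k < n) (hx : 1 ≤ x ∧ x ≤ n) :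
    permVal1 (adjT n k) x = if x = k then k + 1 else if x = k + 1 then k else x := by
  rw [permVal1_of_mem_s11 _ hx, adjT, dif_pos hk, Equiv.swap_apply_def]
  simp only [Fin.ext_iff]
  split_ifs <;> dsimp only at * <;> omega

end PermVal1

section Words

variable {n : ℕ}

def descRun (n a m : ℕ) : Equiv.Perm (Fin n) :=
  ((List.range' a m).reverse.map (adjT n)).prod

lemma descRun_succ (a m : ℕ) : descRun n a (m + 1) = adjT n (a + m) * descRun n a m := by
  simp [descRun, List.range'_1_concat]

lemma permVal1_descRun {a m x : ℕ} (ha : 1 ≤ a) (ham : a + m ≤ n) (hx : 1 ≤ x ∧ x ≤ n) :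
    permVal1 (descRun n a m) x =
      if x = a then a + m else if a < x ∧ x ≤ a + m then x - 1 else x := by
  induction m with
  | zero =>
    rw [descRun, List.range'_zero, List.reverse_nil, List.map_nil, List.prod_nil,
      permVal1_one hx]
    split_ifs <;> omega
  | succ m ih =>
    rw [descRun_succ, permVal1_mul _ _ hx, ih (by omega)]
    have hy : 1 ≤ (if x = a then a + m else if a < x ∧ x ≤ a + m then x - 1 else x) ∧
        (if x = a then a + m else if a < x ∧ x ≤ a + m then x - 1 else x) ≤ n := by
      split_ifs <;> omega
    rw [permVal1_adjT ⟨by omega, by omega⟩ hy]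
    split_ifs <;> omega

def wordProd (n d : ℕ) (w : List (ℕ × ℕ)) : Equiv.Perm (Fin n) :=
  (w.map fun b => adjT n (d + b.2 - b.1)).prod

lemma wordProd_append (d : ℕ) (w₁ w₂ : List (ℕ × ℕ)) :
    wordProd n d (w₁ ++ w₂) = wordProd n d w₁ * wordProd n d w₂ := by
  rw [wordProd, List.map_append, List.prod_append]; rfl

/-- The boxes `(i, j + m), …, (i, j + 1)` of row `i`, in reading order. -/
def rowSegment (i j m : ℕ) : List (ℕ × ℕ) :=
  (List.range' j m).reverse.map fun j0 => (i, j0 + 1)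

lemma wordProd_rowSegment (d : ℕ) {i : ℕ} (hid : i ≤ d) (j m : ℕ) :
    wordProd n d (rowSegment i j m) = descRun n (d + j + 1 - i) m := by
  rw [wordProd, rowSegment, descRun, List.map_map, List.range'_eq_map_range,
    List.range'_eq_map_range, List.map_reverse, List.map_reverse, List.map_map, List.map_map]
  congr 3
  funext t
  simp only [Function.comp_apply]
  congr 1
  omega

end Words

section Diagram

lemma List.reverse_range_eq_append {N q : ℕ} (hq : q < N) :
    (List.range N).reverse =
      (List.range' (q + 1) (N - (q + 1))).reverse ++ q :: (List.range q).reverse := by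
  conv_lhs => rw [List.range_eq_range', show N = q + (N - (q + 1) + 1) by omega,
    ← List.range'_append_1, List.range'_succ]
  simp [List.range_eq_range']

/-- Row `r + 1` of the Young diagram of `μ`, in reading order. -/
def rowBoxes (μ : ℕ → ℕ) (r : ℕ) : List (ℕ × ℕ) :=
  rowSegment (r + 1) 0 (μ (r + 1))

lemma boxWord_eq_flatMap (d : ℕ) (μ : ℕ → ℕ) :
    boxWord d μ = (List.range d).reverse.flatMap (rowBoxes μ) := by
  rw [boxWord]
  congr 1
  funext r
  rw [rowBoxes, rowSegment, ← List.range_eq_range']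

/-- Rows `i + 1, …, d` of the Young diagram of `μ`, in reading order. -/
def lowerRows (d : ℕ) (μ : ℕ → ℕ) (i : ℕ) : List (ℕ × ℕ) :=
  (List.range' i (d - i)).reverse.flatMap (rowBoxes μ)

lemma lowerRows_self (d : ℕ) (μ : ℕ → ℕ) : lowerRows d μ d = [] := by
  simp [lowerRows]

lemma lowerRows_of_lt {d i : ℕ} (μ : ℕ → ℕ) (hid : i < d) :
    lowerRows d μ i = lowerRows d μ (i + 1) ++ rowBoxes μ i := by
  rw [lowerRows, lowerRows, show d - i = d - (i + 1) + 1 by omega, List.range'_succ]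
  simp

def boxPrefix (d : ℕ) (μ : ℕ → ℕ) (i j : ℕ) : List (ℕ × ℕ) :=
  lowerRows d μ i ++ rowSegment i j (μ i - j)

def boxSuffix (μ : ℕ → ℕ) (i j : ℕ) : List (ℕ × ℕ) :=
  rowSegment i 0 (j - 1) ++ (List.range (i - 1)).reverse.flatMap (rowBoxes μ)

variable {d : ℕ} {μ : ℕ → ℕ} {i j : ℕ}

lemma boxWord_eq_append (hi1 : 1 ≤ i) (hid : i ≤ d) (hj1 : 1 ≤ j) (hj : j ≤ μ i) :
    boxWord d μ = boxPrefix d μ i j ++ (i, j) :: boxSuffix μ i j := by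
  have hrow :
      rowBoxes μ (i - 1) = rowSegment i j (μ i - j) ++ (i, j) :: rowSegment i 0 (j - 1) := by
    rw [rowBoxes, rowSegment, rowSegment, rowSegment, Nat.sub_add_cancel hi1,
      ← List.range_eq_range', List.reverse_range_eq_append (q := j - 1) (by omega),
      ← List.range_eq_range']
    simp [Nat.sub_add_cancel hj1]
  rw [boxWord_eq_flatMap, List.reverse_range_eq_append (q := i - 1) (by omega),
    List.flatMap_append, List.flatMap_cons, hrow, boxPrefix, boxSuffix, lowerRows,
    Nat.sub_add_cancel hi1]
  simp

lemma mem_boxWord : (i, j) ∈ boxWord d μ ↔ 1 ≤ i ∧ i ≤ d ∧ 1 ≤ j ∧ j ≤ μ i := by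
  simp only [boxWord_eq_flatMap, rowBoxes, rowSegment, List.mem_flatMap, List.mem_reverse,
    List.mem_range, List.mem_map, List.mem_range'_1, Prod.mk.injEq]
  constructor
  · rintro ⟨r, hr, j0, hj0, rfl, rfl⟩
    omega
  · rintro ⟨hi1, hid, hj1, hj⟩
    exact ⟨i - 1, by omega, j - 1, by rw [Nat.sub_add_cancel hi1]; omega, by omega, by omega⟩

lemma notMem_boxPrefix : (i, j) ∉ boxPrefix d μ i j := by
  simp only [boxPrefix, lowerRows, rowBoxes, rowSegment, List.mem_append, List.mem_flatMap,
    List.mem_reverse, List.mem_map, List.mem_range'_1, Prod.mk.injEq, not_or, not_exists, not_and]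
  constructor <;> intros <;> omega

lemma notMem_boxSuffix : (i, j) ∉ boxSuffix μ i j := by
  simp only [boxSuffix, rowBoxes, rowSegment, List.mem_append, List.mem_flatMap, List.mem_reverse,
    List.mem_map, List.mem_range, List.mem_range'_1, Prod.mk.injEq, not_or, not_exists, not_and]
  constructor <;> intros <;> omega

lemma eq_boxPrefix_of_boxWord_eq {pre suf : List (ℕ × ℕ)}
    (h : boxWord d μ = pre ++ (i, j) :: suf) : pre = boxPrefix d μ i j := by
  obtain ⟨hi1, hid, hj1, hj⟩ :=
    mem_boxWord.mp (h ▸ List.mem_append_right pre List.mem_cons_self)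
  rw [boxWord_eq_append hi1 hid hj1 hj, List.append_cons_inj_of_notMem notMem_boxPrefix
    notMem_boxSuffix] at h
  exact h.1.symm

end Diagram

section Conjugate

/-- The conjugate partition `μ'`. -/
def conjPart (d : ℕ) (μ : ℕ → ℕ) (m : ℕ) : ℕ :=
  ((Finset.Icc 1 d).filter fun r => m ≤ μ r).card

variable {d : ℕ} {μ : ℕ → ℕ} {i m : ℕ}

lemma conjPart_le : conjPart d μ m ≤ d :=
  (Finset.card_filter_le _ _).trans (Nat.card_Icc 1 d).le

lemma conjPart_antitone : Antitone (conjPart d μ) := fun _ _ h =>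
  Finset.card_le_card (Finset.monotone_filter_right _ fun _ _ hr => h.trans hr)

variable (hanti : ∀ a b : ℕ, 1 ≤ a → a ≤ b → μ b ≤ μ a)
include hanti

lemma le_conjPart (hid : i ≤ d) (h : m ≤ μ i) : i ≤ conjPart d μ m := by
  have hsub : Finset.Icc 1 i ⊆ (Finset.Icc 1 d).filter fun r => m ≤ μ r := by
    intro r hr
    rw [Finset.mem_Icc] at hr
    rw [Finset.mem_filter, Finset.mem_Icc]
    exact ⟨⟨hr.1, hr.2.trans hid⟩, h.trans (hanti r i hr.1 hr.2)⟩
  simpa [conjPart] using Finset.card_le_card hsub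

lemma conjPart_lt (hi1 : 1 ≤ i) (h : μ i < m) : conjPart d μ m < i := by
  have hsub : ((Finset.Icc 1 d).filter fun r => m ≤ μ r) ⊆ Finset.Icc 1 (i - 1) := by
    intro r hr
    rw [Finset.mem_filter, Finset.mem_Icc] at hr
    rw [Finset.mem_Icc]
    have := hanti i r hi1
    omega
  have := Finset.card_le_card hsub
  rw [Nat.card_Icc] at this
  exact lt_of_le_of_lt this (by omega)

lemma conjPart_eq (hi1 : 1 ≤ i) (hid : i ≤ d) (h : m ≤ μ i) (h' : μ (i + 1) < m) :
    conjPart d μ m = i :=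
  le_antisymm (Nat.le_of_lt_succ (conjPart_lt hanti (by omega) h')) (le_conjPart hanti hid h)

/-- The disjointness half of the partition of `{1, …, n}` into the `d + 1 - i + μ i` and the
`d + m - μ'_m` (Macdonald, *Symmetric functions and Hall polynomials*, I (1.7)). -/
lemma sub_conjPart_ne (hi1 : 1 ≤ i) (hid : i ≤ d) :
    d + m - conjPart d μ m ≠ d + 1 - i + μ i := by
  rcases le_or_gt m (μ i) with h | h
  · have := le_conjPart hanti hid h
    omega
  · have := conjPart_lt (d := d) hanti hi1 h
    omega

end Conjugate

section Grassmannian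

variable {n d : ℕ} {μ : ℕ → ℕ} {v : Equiv.Perm (Fin n)}

lemma card_image_permVal1_Icc (v : Equiv.Perm (Fin n)) (hdn : d ≤ n) :
    ((Finset.Icc 1 d).image (permVal1 v)).card = d := by
  rw [Finset.card_image_of_injOn, Nat.card_Icc, Nat.add_sub_cancel]
  intro x hx y hy hxy
  simp only [Finset.coe_Icc, Set.mem_Icc] at hx hy
  exact (permVal1_inj v ⟨hx.1, by omega⟩ ⟨hy.1, by omega⟩).mp hxy

/-- The values `v(d+1) < ⋯ < v(n)` and `d + 1 - μ'_1 < ⋯ < d + (n - d) - μ'_{n-d}` are both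
increasing enumerations of the complement of `v({1, …, d}) = {d + 1 - i + μ i}`. -/
lemma permVal1_add_eq_of_hasShape (hanti : ∀ a b : ℕ, 1 ≤ a → a ≤ b → μ b ≤ μ a)
    (hv : IsGrassmannian d v) (hshape : hasShape d v μ) {m : ℕ} (hm1 : 1 ≤ m)
    (hm : m ≤ n - d) :
    permVal1 v (d + m) = d + m - conjPart d μ m := by
  set S := Finset.Icc 1 n \ (Finset.Icc 1 d).image (permVal1 v)
  have hS : S.card = n - d := by
    rw [Finset.card_sdiff_of_subset, Nat.card_Icc, Nat.add_sub_cancel,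
      card_image_permVal1_Icc v (by omega)]
    intro y hy
    obtain ⟨x, hx, rfl⟩ := Finset.mem_image.mp hy
    rw [Finset.mem_Icc] at hx ⊢
    exact permVal1_mem v ⟨hx.1, by omega⟩
  have hupper : ∀ t : Fin (n - d), permVal1 v (d + (t + 1)) ∈ S := by
    intro t
    rw [Finset.mem_sdiff, Finset.mem_Icc, Finset.mem_image]
    refine ⟨permVal1_mem v ⟨by omega, by omega⟩, ?_⟩
    rintro ⟨x, hx, hxt⟩
    rw [Finset.mem_Icc] at hx
    have := (permVal1_inj v ⟨hx.1, by omega⟩ ⟨by omega, by omega⟩).mp hxt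
    omega
  have hconj : ∀ t : Fin (n - d), d + (t + 1) - conjPart d μ (t + 1) ∈ S := by
    intro t
    rw [Finset.mem_sdiff, Finset.mem_Icc, Finset.mem_image]
    refine ⟨⟨by have := conjPart_le (d := d) (μ := μ) (m := t + 1); omega, by omega⟩, ?_⟩
    rintro ⟨x, hx, hxt⟩
    obtain ⟨i, hi1, hid, rfl⟩ : ∃ i, 1 ≤ i ∧ i ≤ d ∧ x = d + 1 - i := by
      rw [Finset.mem_Icc] at hx
      exact ⟨d + 1 - x, by omega, by omega, by omega⟩
    rw [hshape i hi1 hid] at hxt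
    exact sub_conjPart_ne hanti hi1 hid hxt.symm
  have hupper_mono : StrictMono fun t : Fin (n - d) => permVal1 v (d + (t + 1)) :=
    fun t t' h => hv.2 _ _ (by omega) (by simpa using h) (by omega)
  have hconj_mono : StrictMono fun t : Fin (n - d) => d + (t + 1) - conjPart d μ (t + 1) := by
    intro t t' (h : (t : ℕ) < t')
    have := conjPart_antitone (d := d) (μ := μ) (show (t : ℕ) + 1 ≤ t' + 1 by omega)
    have := conjPart_le (d := d) (μ := μ) (m := t + 1)
    dsimp only
    omega
  have key := congrFun ((Finset.orderEmbOfFin_unique hS hupper hupper_mono).trans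
    (Finset.orderEmbOfFin_unique hS hconj hconj_mono).symm) ⟨m - 1, by omega⟩
  simpa only [Nat.sub_add_cancel hm1] using key

end Grassmannian

section ReadingWord

variable {n d : ℕ} {μ : ℕ → ℕ}

lemma wordProd_lowerRows_self : wordProd n d (lowerRows d μ d) = 1 := by
  rw [lowerRows_self]; rfl

lemma wordProd_lowerRows_of_lt {i : ℕ} (hid : i < d) :
    wordProd n d (lowerRows d μ i) =
      wordProd n d (lowerRows d μ (i + 1)) * descRun n (d - i) (μ (i + 1)) := by
  rw [lowerRows_of_lt μ hid, wordProd_append, rowBoxes, wordProd_rowSegment d (by omega),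
    Nat.add_sub_add_right]
  rfl

lemma wordProd_boxPrefix {i : ℕ} (hid : i ≤ d) (j : ℕ) :
    wordProd n d (boxPrefix d μ i j) =
      wordProd n d (lowerRows d μ i) * descRun n (d + j + 1 - i) (μ i - j) := by
  rw [boxPrefix, wordProd_append, wordProd_rowSegment d hid]

variable (hanti : ∀ a b : ℕ, 1 ≤ a → a ≤ b → μ b ≤ μ a)
include hanti

lemma permVal1_lowerRows_of_lt {i y : ℕ} (hid : i ≤ d) (hy : y ≤ n)
    (hlt : d - i + μ (i + 1) < y) : permVal1 (wordProd n d (lowerRows d μ i)) y = y := by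
  induction hid using Nat.decreasingInduction with
  | self => rw [wordProd_lowerRows_self, permVal1_one ⟨by omega, hy⟩]
  | of_succ i hid ih =>
    have := hanti (i + 1) (i + 1 + 1) (by omega) (by omega)
    rw [wordProd_lowerRows_of_lt hid, permVal1_mul _ _ ⟨by omega, hy⟩,
      permVal1_descRun (by omega) (by omega) ⟨by omega, hy⟩, if_neg (by omega),
      if_neg (by omega)]
    exact ih (by omega)

/-- Each row `r > i` with `j ≤ μ r` lowers `d + j - i` by one. -/
lemma permVal1_lowerRows_add_sub (hμn : μ 1 ≤ n - d) {i j : ℕ} (hi1 : 1 ≤ i) (hid : i ≤ d)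
    (hj1 : 1 ≤ j) (hj : j ≤ μ i) :
    permVal1 (wordProd n d (lowerRows d μ i)) (d + j - i) = d + j - conjPart d μ j := by
  have hjn : j ≤ n - d := hj.trans ((hanti 1 i le_rfl hi1).trans hμn)
  induction hid using Nat.decreasingInduction with
  | self =>
    rw [wordProd_lowerRows_self, permVal1_one ⟨by omega, by omega⟩,
      le_antisymm conjPart_le (le_conjPart hanti le_rfl hj)]
  | of_succ i hid ih =>
    have hμi := hanti (i + 1) (i + 1 + 1) (by omega) (by omega)
    have hμn' := (hanti 1 (i + 1) le_rfl (by omega)).trans hμn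
    rw [wordProd_lowerRows_of_lt hid, permVal1_mul _ _ ⟨by omega, by omega⟩,
      permVal1_descRun (by omega) (by omega) ⟨by omega, by omega⟩, if_neg (by omega)]
    by_cases hji : j ≤ μ (i + 1)
    · rw [if_pos (by omega), show d + j - i - 1 = d + j - (i + 1) by omega]
      exact ih (by omega) hji
    · rw [if_neg (by omega),
        permVal1_lowerRows_of_lt hanti (i := i + 1) hid (by omega) (by omega),
        conjPart_eq hanti hi1 hid.le hj (by omega)]

end ReadingWord

section BoxPrefix

variable {n d : ℕ} {μ : ℕ → ℕ} {i j : ℕ}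
variable (hanti : ∀ a b : ℕ, 1 ≤ a → a ≤ b → μ b ≤ μ a) (hμn : μ 1 ≤ n - d)
include hanti hμn

lemma permVal1_boxPrefix_add_sub (hi1 : 1 ≤ i) (hid : i ≤ d) (hj1 : 1 ≤ j) (hj : j ≤ μ i) :
    permVal1 (wordProd n d (boxPrefix d μ i j)) (d + j - i) = d + j - conjPart d μ j := by
  have := (hanti 1 i le_rfl hi1).trans hμn
  rw [wordProd_boxPrefix hid, permVal1_mul _ _ ⟨by omega, by omega⟩,
    permVal1_descRun (by omega) (by omega) ⟨by omega, by omega⟩, if_neg (by omega),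
    if_neg (by omega), permVal1_lowerRows_add_sub hanti hμn hi1 hid hj1 hj]

lemma permVal1_boxPrefix_add_sub_add_one (hi1 : 1 ≤ i) (hid : i ≤ d) (hj1 : 1 ≤ j)
    (hj : j ≤ μ i) :
    permVal1 (wordProd n d (boxPrefix d μ i j)) (d + j - i + 1) = d + 1 - i + μ i := by
  have := (hanti 1 i le_rfl hi1).trans hμn
  have := hanti i (i + 1) hi1 (by omega)
  rw [wordProd_boxPrefix hid, permVal1_mul _ _ ⟨by omega, by omega⟩,
    permVal1_descRun (by omega) (by omega) ⟨by omega, by omega⟩, if_pos (by omega),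
    permVal1_lowerRows_of_lt hanti hid (by omega) (by omega)]
  omega

end BoxPrefix

theorem stmt_11_general (n d : ℕ) (μ : ℕ → ℕ)
    (hμ : IsPartitionBounded d (n - d) μ) (v : Equiv.Perm (Fin n))
    (hv : IsGrassmannian d v) (hshape : hasShape d v μ)
    (pre suf : List (ℕ × ℕ)) (box : ℕ × ℕ)
    (hsplit : boxWord d μ = pre ++ box :: suf) :
    eVec n (permVal1 ((pre.map (fun b => adjT n (d + b.2 - b.1))).prod)
        (d + box.2 - box.1))
      - eVec n (permVal1 ((pre.map (fun b => adjT n (d + b.2 - b.1))).prod)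
        (d + box.2 - box.1 + 1))
    = eVec n (permVal1 v (d + box.2)) - eVec n (permVal1 v (d + 1 - box.1)) := by
  obtain ⟨hanti, -, hμn⟩ := hμ
  obtain ⟨i, j⟩ := box
  obtain ⟨hi1, hid, hj1, hj⟩ :=
    mem_boxWord.mp (hsplit ▸ List.mem_append_right pre List.mem_cons_self)
  obtain rfl := eq_boxPrefix_of_boxWord_eq hsplit
  rw [← wordProd.eq_1]
  dsimp only
  rw [permVal1_boxPrefix_add_sub hanti hμn hi1 hid hj1 hj,
    permVal1_boxPrefix_add_sub_add_one hanti hμn hi1 hid hj1 hj,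
    permVal1_add_eq_of_hasShape hanti hv hshape hj1
      (hj.trans ((hanti 1 i le_rfl hi1).trans hμn)),
    hshape i hi1 hid]

/-- With `(s_{i₁}, …, s_{i_l})` the reading word of `T_μ` (a reduced word for `v`), if the
`c`-th letter lies in box `(i,j)` of `D_μ` and `σ = s_{i₁} ⋯ s_{i_{c−1}}`, then
`r(c) = σ(e_{i_c} − e_{i_c + 1}) = e_{v(d+j)} − e_{v(d+1−i)}`. -/
theorem stmt_11 (n d : ℕ) (hd : 0 < d) (hdn : d < n) (μ : ℕ → ℕ)
    (hμ : IsPartitionBounded d (n - d) μ) (v : Equiv.Perm (Fin n))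
    (hv : IsGrassmannian d v) (hshape : hasShape d v μ)
    (pre suf : List (ℕ × ℕ)) (box : ℕ × ℕ)
    (hsplit : boxWord d μ = pre ++ box :: suf) :
    eVec n (permVal1 ((pre.map (fun b => adjT n (d + b.2 - b.1))).prod)
        (d + box.2 - box.1))
      - eVec n (permVal1 ((pre.map (fun b => adjT n (d + b.2 - b.1))).prod)
        (d + box.2 - box.1 + 1))
    = eVec n (permVal1 v (d + box.2)) - eVec n (permVal1 v (d + 1 - box.1)) :=
  stmt_11_general n d μ hμ v hv hshape pre suf box hsplit
end

section
/- Fix integers 0 < d < n and partitions λ, μ with at most d parts, each at most n−d, with λ_i ≤ μ_i for all i. Then every set-valued tableau T ∈ T_λ(μ) can be obtained from the top tableau T^top by applying a finite sequence of excitations (of types 1 and 2) of set-valued tableaux. -/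
instance (d : ℕ) (lam : ℕ → ℕ) (b : ℕ × ℕ) : Decidable (inDP d lam b) := by
  unfold inDP; infer_instance

/-- A set-valued tableau of shape `lam` (at most `d` rows): a function assigning to each
box of `D_lam` a nonempty subset of `{1, …, d}` (and `∅` off the diagram), which is
semistandard: entries weakly increase along rows and strictly increase down columns. -/
def IsSVT (d : ℕ) (lam : ℕ → ℕ) (T : ℕ × ℕ → Finset ℕ) : Prop :=
  (∀ b, inDP d lam b → (T b).Nonempty) ∧
  (∀ b, inDP d lam b → ∀ x ∈ T b, 1 ≤ x ∧ x ≤ d) ∧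
  (∀ b, ¬ inDP d lam b → T b = ∅) ∧
  (∀ i j : ℕ, inDP d lam (i, j) → inDP d lam (i, j + 1) →
    ∀ x ∈ T (i, j), ∀ y ∈ T (i, j + 1), x ≤ y) ∧
  (∀ i j : ℕ, inDP d lam (i, j) → inDP d lam (i + 1, j) →
    ∀ x ∈ T (i, j), ∀ y ∈ T (i + 1, j), x < y)

/-- The tableau `T` is restricted by the partition `μ`: `x + j − i ≤ μ_x` for each box
`(i,j)` of `D_lam` and each entry `x` of that box. -/
def RestrictedBy (d : ℕ) (lam μ : ℕ → ℕ) (T : ℕ × ℕ → Finset ℕ) : Prop :=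
  ∀ i j : ℕ, inDP d lam (i, j) → ∀ x ∈ T (i, j), x + j ≤ μ x + i

/-- One excitation step (of type 1 or type 2) on set-valued tableaux. -/
def SVTStep (d : ℕ) (lam μ : ℕ → ℕ) (T T' : ℕ × ℕ → Finset ℕ) : Prop :=
  ∃ i j x : ℕ, inDP d lam (i, j) ∧ x ∈ T (i, j) ∧ x ∉ T (i, j + 1) ∧
    (x + 1) ∉ T (i, j) ∧ (x + 1) ∉ T (i + 1, j) ∧ (x + 1) + j ≤ μ (x + 1) + i ∧
    (T' = Function.update T (i, j) (((T (i, j)).erase x) ∪ {x + 1}) ∨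
     T' = Function.update T (i, j) ((T (i, j)) ∪ {x + 1}))

/-- The top tableau: each box of row `i` contains the single entry `i`. -/
def Ttop (d : ℕ) (lam : ℕ → ℕ) : ℕ × ℕ → Finset ℕ :=
  fun b => if inDP d lam b then {b.1} else ∅

/-- In a semistandard tableau, every entry in row `i` is at least `i`. -/
lemma svt_entry_ge (d : ℕ) (lam : ℕ → ℕ)
    (hdec : ∀ i j : ℕ, 1 ≤ i → i ≤ j → lam j ≤ lam i)
    (T : ℕ × ℕ → Finset ℕ) (hT : IsSVT d lam T) :
    ∀ i j : ℕ, inDP d lam (i, j) → ∀ x ∈ T (i, j), i ≤ x := by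
  intro i
  induction i with
  | zero => intro j _ x _; omega
  | succ k ih =>
    intro j hin x hx
    rcases Nat.eq_zero_or_pos k with hk | hk
    · subst hk
      exact (hT.2.1 _ hin x hx).1
    · have hin' : inDP d lam (k, j) := by
        obtain ⟨h1, h2, h3, h4⟩ := hin
        exact ⟨hk, by omega, h3, le_trans h4 (hdec k (k+1) hk (by omega))⟩
      obtain ⟨z, hz⟩ := hT.1 _ hin'
      have h1 := hT.2.2.2.2 k j hin' hin z hz x hx
      have h2 := ih j hin' z hz
      omega


/-- Every set-valued tableau of shape `lam` restricted by `μ` can be obtained from the top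
tableau by a finite sequence of excitations. -/
theorem stmt_12 (n d : ℕ) (hd : 0 < d) (hdn : d < n) (lam μ : ℕ → ℕ)
    (hlam : IsPartitionBounded d (n - d) lam) (hμ : IsPartitionBounded d (n - d) μ)
    (hle : ∀ i, lam i ≤ μ i)
    (T : ℕ × ℕ → Finset ℕ) (hT : IsSVT d lam T) (hres : RestrictedBy d lam μ T) :
    Relation.ReflTransGen (SVTStep d lam μ) (Ttop d lam) T := by
  classical
  set S : Finset (ℕ × ℕ) := Finset.Icc 1 d ×ˢ Finset.Icc 1 (lam 1) with hSdef
  suffices H : ∀ N : ℕ, ∀ T : ℕ × ℕ → Finset ℕ, IsSVT d lam T → RestrictedBy d lam μ T →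
      (∑ b ∈ S, (T b).sum id) = N →
      Relation.ReflTransGen (SVTStep d lam μ) (Ttop d lam) T by
    exact H _ T hT hres rfl
  clear hT hres T
  intro N
  induction N using Nat.strong_induction_on with
  | _ N IH =>
    intro T hT hres hW
    by_cases hEx : ∃ y : ℕ, ∃ i j : ℕ, inDP d lam (i, j) ∧ y ∈ T (i, j) ∧ i < y
    · -- there is an excited entry; pick minimal y, then minimal column j
      obtain ⟨i, j0, hin0, hyT0, hiy0⟩ := Nat.find_spec hEx
      set y : ℕ := Nat.find hEx with hydef
      have hymin : ∀ z : ℕ, z < y → ¬ ∃ i j : ℕ, inDP d lam (i, j) ∧ z ∈ T (i, j) ∧ i < z :=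
        fun z hz => Nat.find_min hEx hz
      have hQ : ∃ j : ℕ, inDP d lam (i, j) ∧ y ∈ T (i, j) := ⟨j0, hin0, hyT0⟩
      set j : ℕ := Nat.find hQ with hjdef
      obtain ⟨hin, hyT⟩ := Nat.find_spec hQ
      have hjmin : ∀ j' : ℕ, j' < j → ¬ (inDP d lam (i, j') ∧ y ∈ T (i, j')) :=
        fun j' hj' => Nat.find_min hQ hj'
      have hiy : i < y := hiy0
      have hi1 : 1 ≤ i := hin.1
      have hy2 : 2 ≤ y := by omega
      have hyd : y ≤ d := (hT.2.1 _ hin y hyT).2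
      -- facts about neighboring boxes
      have hR : (y - 1) ∉ T (i, j + 1) := by
        by_cases hD1 : inDP d lam (i, j + 1)
        · intro hmem
          have := hT.2.2.2.1 i j hin hD1 y hyT (y - 1) hmem
          omega
        · rw [hT.2.2.1 _ hD1]; exact Finset.notMem_empty _
      have hDw : y ∉ T (i + 1, j) := by
        by_cases hD1 : inDP d lam (i + 1, j)
        · intro hmem
          have := hT.2.2.2.2 i j hin hD1 y hyT y hmem
          omega
        · rw [hT.2.2.1 _ hD1]; exact Finset.notMem_empty _
      have hL : ∀ j' : ℕ, inDP d lam (i, j') → j' + 1 = j → ∀ z ∈ T (i, j'), z ≤ y - 1 := by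
        intro j' hin' hj' z hz
        have h1 : z ≤ y :=
          hT.2.2.2.1 i j' hin' (by rw [hj']; exact hin) z hz y (by rw [hj']; exact hyT)
        have h2 : z ≠ y := by
          intro hzy
          exact hjmin j' (by omega) ⟨hin', by rw [← hzy]; exact hz⟩
        omega
      have hU : ∀ i' : ℕ, inDP d lam (i', j) → i' + 1 = i → ∀ w ∈ T (i', j), w < y - 1 := by
        intro i' hin' hi' w hw
        have h1 : w < y :=
          hT.2.2.2.2 i' j hin' (by rw [hi']; exact hin) w hw y (by rw [hi']; exact hyT)
        have h2 : w ≠ y - 1 := by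
          intro hwy
          exact hymin (y - 1) (by omega) ⟨i', j, hin', by rw [← hwy]; exact hw, by omega⟩
        omega
      -- membership of the changed box in the summation set S
      have hpS : (i, j) ∈ S := by
        rw [hSdef, Finset.mem_product]
        constructor
        · rw [Finset.mem_Icc]; exact ⟨hin.1, hin.2.1⟩
        · rw [Finset.mem_Icc]
          exact ⟨hin.2.2.1, le_trans hin.2.2.2 (hlam.1 1 i le_rfl hi1)⟩
      have decomp : ∀ f : ℕ × ℕ → Finset ℕ,
          (∑ b ∈ S, (f b).sum id) = (f (i, j)).sum id + ∑ b ∈ S.erase (i, j), (f b).sum id :=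
        fun f => (Finset.add_sum_erase S (fun b => (f b).sum id) hpS).symm
      -- the de-excited tableau
      by_cases hcase : (y - 1) ∈ T (i, j)
      case pos =>
        -- reverse of type 2: remove y from the box
        set s'' : Finset ℕ := (T (i, j)).erase y with hsdef
        set T'' : ℕ × ℕ → Finset ℕ := Function.update T (i, j) s'' with hTdef
        have hsub : ∀ b, T'' b ⊆ T b := by
          intro b
          rw [hTdef, Function.update_apply]
          split
          · next h => rw [h]; exact Finset.erase_subset _ _
          · exact subset_rfl
        have hT''same : T'' (i, j) = s'' := Function.update_self _ _ _
        have hym : y - 1 ∈ s'' := Finset.mem_erase.mpr ⟨by omega, hcase⟩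
        have hT'' : IsSVT d lam T'' := by
          refine ⟨?_, ?_, ?_, ?_, ?_⟩
          · intro b hb
            by_cases hbp : b = (i, j)
            · rw [hbp, hT''same]; exact ⟨y - 1, hym⟩
            · rw [hTdef, Function.update_of_ne hbp]; exact hT.1 b hb
          · intro b hb x hx; exact hT.2.1 b hb x (hsub b hx)
          · intro b hb
            have hbp : b ≠ (i, j) := by intro h; rw [h] at hb; exact hb hin
            rw [hTdef, Function.update_of_ne hbp]; exact hT.2.2.1 b hb
          · intro a b h1 h2 x hx w hw
            exact hT.2.2.2.1 a b h1 h2 x (hsub _ hx) w (hsub _ hw)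
          · intro a b h1 h2 x hx w hw
            exact hT.2.2.2.2 a b h1 h2 x (hsub _ hx) w (hsub _ hw)
        have hres'' : RestrictedBy d lam μ T'' := by
          intro a b h1 x hx; exact hres a b h1 x (hsub _ hx)
        have hWlt : (∑ b ∈ S, (T'' b).sum id) < N := by
          rw [← hW, decomp T'', decomp T]
          have hrest : (∑ b ∈ S.erase (i, j), (T'' b).sum id)
              = ∑ b ∈ S.erase (i, j), (T b).sum id := by
            refine Finset.sum_congr rfl ?_
            intro b hb
            rw [hTdef, Function.update_of_ne (Finset.ne_of_mem_erase hb)]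
          rw [hrest, hT''same]
          have hsum : s''.sum id + y = (T (i, j)).sum id := by
            rw [hsdef]
            have := Finset.sum_erase_add (T (i, j)) id hyT
            simpa using this
          omega
        have hstep : SVTStep d lam μ T'' T := by
          refine ⟨i, j, y - 1, hin, ?_, ?_, ?_, ?_, ?_, ?_⟩
          · rw [hT''same]; exact hym
          · rw [hTdef, Function.update_of_ne (by simp)]; exact hR
          · rw [hT''same]
            have hy1 : y - 1 + 1 = y := by omega
            rw [hy1, hsdef]
            exact Finset.notMem_erase _ _
          · rw [hTdef, Function.update_of_ne (by simp)]
            have hy1 : y - 1 + 1 = y := by omega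
            rw [hy1]; exact hDw
          · have hy1 : y - 1 + 1 = y := by omega
            rw [hy1]; exact hres i j hin y hyT
          · right
            rw [hT''same]
            have hy1 : y - 1 + 1 = y := by omega
            rw [hy1, hsdef]
            have hu : (T (i, j)).erase y ∪ {y} = T (i, j) := by
              ext z
              simp only [Finset.mem_union, Finset.mem_erase, Finset.mem_singleton]
              constructor
              · rintro (⟨-, h⟩ | rfl)
                · exact h
                · exact hyT
              · intro h
                rcases eq_or_ne z y with rfl | hz
                · exact Or.inr rfl
                · exact Or.inl ⟨hz, h⟩
            rw [hu, hTdef, Function.update_idem, Function.update_eq_self]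
        exact Relation.ReflTransGen.tail (IH _ hWlt T'' hT'' hres'' rfl) hstep
      case neg =>
        -- reverse of type 1: replace y by y - 1 in the box
        set s'' : Finset ℕ := insert (y - 1) ((T (i, j)).erase y) with hsdef
        set T'' : ℕ × ℕ → Finset ℕ := Function.update T (i, j) s'' with hTdef
        have hT''same : T'' (i, j) = s'' := Function.update_self _ _ _
        have hT''ne : ∀ b : ℕ × ℕ, b ≠ (i, j) → T'' b = T b := by
          intro b hb; rw [hTdef, Function.update_of_ne hb]
        have hym : y - 1 ∈ s'' := Finset.mem_insert_self _ _
        have hmem : ∀ b : ℕ × ℕ, ∀ x : ℕ, x ∈ T'' b → x ∈ T b ∨ (b = (i, j) ∧ x = y - 1) := by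
          intro b x hx
          by_cases hbp : b = (i, j)
          · rw [hbp, hT''same, hsdef] at hx
            rcases Finset.mem_insert.mp hx with h | h
            · exact Or.inr ⟨hbp, h⟩
            · exact Or.inl (by rw [hbp]; exact Finset.mem_of_mem_erase h)
          · rw [hT''ne b hbp] at hx; exact Or.inl hx
        have hT'' : IsSVT d lam T'' := by
          refine ⟨?_, ?_, ?_, ?_, ?_⟩
          · intro b hb
            by_cases hbp : b = (i, j)
            · rw [hbp, hT''same]; exact ⟨y - 1, hym⟩
            · rw [hT''ne b hbp]; exact hT.1 b hb
          · intro b hb x hx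
            rcases hmem b x hx with h | ⟨hb', hx'⟩
            · exact hT.2.1 b hb x h
            · subst hx'; constructor <;> omega
          · intro b hb
            have hbp : b ≠ (i, j) := by intro h; rw [h] at hb; exact hb hin
            rw [hT''ne b hbp]; exact hT.2.2.1 b hb
          · -- rows weakly increase
            intro a b h1 h2 x hx w hw
            rcases hmem _ x hx with hx' | ⟨hb', hx'⟩ <;>
              rcases hmem _ w hw with hw' | ⟨hb'', hw'⟩
            · exact hT.2.2.2.1 a b h1 h2 x hx' w hw'
            · have ha : a = i := congrArg Prod.fst hb''
              have hbj : b + 1 = j := congrArg Prod.snd hb''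
              rw [ha] at h1 hx'
              have h3 := hL b h1 hbj x hx'
              omega
            · have ha : a = i := congrArg Prod.fst hb'
              have hbj : b = j := congrArg Prod.snd hb'
              rw [ha, hbj] at h2 hw'
              have h3 := hT.2.2.2.1 i j hin h2 y hyT w hw'
              omega
            · exfalso
              have hb1 : b = j := congrArg Prod.snd hb'
              have hb2 : b + 1 = j := congrArg Prod.snd hb''
              omega
          · -- columns strictly increase
            intro a b h1 h2 x hx w hw
            rcases hmem _ x hx with hx' | ⟨hb', hx'⟩ <;>
              rcases hmem _ w hw with hw' | ⟨hb'', hw'⟩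
            · exact hT.2.2.2.2 a b h1 h2 x hx' w hw'
            · have ha : a + 1 = i := congrArg Prod.fst hb''
              have hbj : b = j := congrArg Prod.snd hb''
              rw [hbj] at h1 hx'
              have h3 := hU a h1 ha x hx'
              omega
            · have ha : a = i := congrArg Prod.fst hb'
              have hbj : b = j := congrArg Prod.snd hb'
              rw [ha, hbj] at h2 hw'
              have h3 := hT.2.2.2.2 i j hin h2 y hyT w hw'
              omega
            · exfalso
              have hb1 : a = i := congrArg Prod.fst hb'
              have hb2 : a + 1 = i := congrArg Prod.fst hb''
              omega
        have hres'' : RestrictedBy d lam μ T'' := by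
          intro a b h1 x hx
          rcases hmem _ x hx with hx' | ⟨hb', hx'⟩
          · exact hres a b h1 x hx'
          · have ha : a = i := congrArg Prod.fst hb'
            have hbj : b = j := congrArg Prod.snd hb'
            subst hx'
            rw [ha, hbj]
            have h1' := hres i j hin y hyT
            have h2' : μ y ≤ μ (y - 1) := hμ.1 (y - 1) y (by omega) (by omega)
            omega
        have hWlt : (∑ b ∈ S, (T'' b).sum id) < N := by
          rw [← hW, decomp T'', decomp T]
          have hrest : (∑ b ∈ S.erase (i, j), (T'' b).sum id)
              = ∑ b ∈ S.erase (i, j), (T b).sum id := by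
            refine Finset.sum_congr rfl ?_
            intro b hb
            exact congrArg (fun s => s.sum id) (hT''ne b (Finset.ne_of_mem_erase hb))
          rw [hrest, hT''same]
          have hnm : y - 1 ∉ (T (i, j)).erase y := by
            intro h; exact hcase (Finset.mem_of_mem_erase h)
          have hs1 : s''.sum id = (y - 1) + ((T (i, j)).erase y).sum id := by
            rw [hsdef, Finset.sum_insert hnm]; rfl
          have hs2 : ((T (i, j)).erase y).sum id + y = (T (i, j)).sum id := by
            have := Finset.sum_erase_add (T (i, j)) id hyT
            simpa using this
          omega
        have hstep : SVTStep d lam μ T'' T := by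
          refine ⟨i, j, y - 1, hin, ?_, ?_, ?_, ?_, ?_, ?_⟩
          · rw [hT''same]; exact hym
          · rw [hT''ne _ (by simp)]; exact hR
          · rw [hT''same]
            have hy1 : y - 1 + 1 = y := by omega
            rw [hy1, hsdef]
            intro h
            rcases Finset.mem_insert.mp h with h' | h'
            · omega
            · exact (Finset.notMem_erase _ _) h'
          · rw [hT''ne _ (by simp)]
            have hy1 : y - 1 + 1 = y := by omega
            rw [hy1]; exact hDw
          · have hy1 : y - 1 + 1 = y := by omega
            rw [hy1]; exact hres i j hin y hyT
          · left
            rw [hT''same]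
            have hy1 : y - 1 + 1 = y := by omega
            have hnm : y - 1 ∉ (T (i, j)).erase y := by
              intro h; exact hcase (Finset.mem_of_mem_erase h)
            have he : s''.erase (y - 1) = (T (i, j)).erase y := by
              rw [hsdef, Finset.erase_insert hnm]
            rw [he, hy1]
            have hu : (T (i, j)).erase y ∪ {y} = T (i, j) := by
              ext z
              simp only [Finset.mem_union, Finset.mem_erase, Finset.mem_singleton]
              constructor
              · rintro (⟨-, h⟩ | rfl)
                · exact h
                · exact hyT
              · intro h
                rcases eq_or_ne z y with rfl | hz
                · exact Or.inr rfl
                · exact Or.inl ⟨hz, h⟩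
            rw [hu, hTdef, Function.update_idem, Function.update_eq_self]
        exact Relation.ReflTransGen.tail (IH _ hWlt T'' hT'' hres'' rfl) hstep
    · -- no excited entry: T is the top tableau
      have hTtop : T = Ttop d lam := by
        funext b
        by_cases hb : inDP d lam b
        · have hb' : inDP d lam (b.1, b.2) := by simpa using hb
          have hge := svt_entry_ge d lam hlam.1 T hT b.1 b.2 hb'
          have hsing : T b = {b.1} := by
            apply Finset.ext
            intro x
            simp only [Finset.mem_singleton]
            constructor
            · intro hx
              have h1 : b.1 ≤ x := hge x (by simpa using hx)
              have h2 : ¬ b.1 < x := fun h =>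
                hEx ⟨x, b.1, b.2, hb', by simpa using hx, h⟩
              omega
            · intro hx
              obtain ⟨z, hz⟩ := hT.1 b hb
              have h1 : b.1 ≤ z := hge z (by simpa using hz)
              have h2 : ¬ b.1 < z := fun h =>
                hEx ⟨z, b.1, b.2, hb', by simpa using hz, h⟩
              have h3 : z = b.1 := by omega
              rw [hx, ← h3]; exact hz
          rw [hsing, Ttop, if_pos hb]
        · rw [hT.2.2.1 b hb, Ttop, if_neg hb]
      rw [hTtop]
end

section
/- Fix integers 0 < d < n and partitions λ, μ with at most d parts, each at most n−d, with λ_i ≤ μ_i for all i. The map f defined by f(T) = {(x, x+j−i) : (i,j) ∈ D_λ, x ∈ T(i,j)} is a bijection from the set T_λ(μ) of set-valued tableaux of shape λ restricted by μ onto the set E_λ(μ) of excited Young diagrams of D_λ in D_μ. -/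
/-- One excitation step (of type 1 or type 2) on subsets of the Young diagram `D_μ`. -/
def ExcStepA (d : ℕ) (μ : ℕ → ℕ) (C C' : Finset (ℕ × ℕ)) : Prop :=
  ∃ i j : ℕ, (i, j) ∈ C ∧
    inDP d μ (i + 1, j) ∧ (i + 1, j) ∉ C ∧
    inDP d μ (i, j + 1) ∧ (i, j + 1) ∉ C ∧
    inDP d μ (i + 1, j + 1) ∧ (i + 1, j + 1) ∉ C ∧
    (C' = (C.erase (i, j)) ∪ {(i + 1, j + 1)} ∨ C' = C ∪ {(i + 1, j + 1)})

/-- The Young diagram `D_lam` (at most `d` rows, columns at most `c`) as a finset. -/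
def Dfin (d c : ℕ) (lam : ℕ → ℕ) : Finset (ℕ × ℕ) :=
  ((Finset.Icc 1 d) ×ˢ (Finset.Icc 1 c)).filter (fun b => b.2 ≤ lam b.1)

/-- The map `f` sending a set-valued tableau of shape `lam` to a subset of `D_μ`:
`f(T) = {(x, x+j−i) : (i,j) ∈ D_lam, x ∈ T(i,j)}`. -/
def fmap (d c : ℕ) (lam : ℕ → ℕ) (T : ℕ × ℕ → Finset ℕ) : Finset (ℕ × ℕ) :=
  (Dfin d c lam).biUnion (fun b => (T b).image (fun x => (x, x + b.2 - b.1)))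

namespace SVTProof

variable {d c : ℕ} {lam μ : ℕ → ℕ} {T T' : ℕ × ℕ → Finset ℕ}

lemma inDP_of_mem (hT : IsSVT d lam T) {b : ℕ × ℕ} {x : ℕ} (h : x ∈ T b) :
    inDP d lam b := by
  by_contra hc
  rw [hT.2.2.1 b hc] at h
  exact absurd h (Finset.notMem_empty x)

lemma inDP_mono (hlam : IsPartitionBounded d c lam) {a b a' b' : ℕ}
    (h : inDP d lam (a, b)) (h1 : 1 ≤ a') (h2 : a' ≤ a) (h3 : 1 ≤ b') (h4 : b' ≤ b) :
    inDP d lam (a', b') := by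
  obtain ⟨-, h5, -, h6⟩ := h
  exact ⟨h1, le_trans h2 h5, h3, le_trans h4 (le_trans h6 (hlam.1 a' a h1 h2))⟩

lemma mem_Dfin_iff (hlam : IsPartitionBounded d c lam) {b : ℕ × ℕ} :
    b ∈ Dfin d c lam ↔ inDP d lam b := by
  simp only [Dfin, Finset.mem_filter, Finset.mem_product, Finset.mem_Icc, inDP]
  constructor
  · rintro ⟨⟨⟨h1, h2⟩, h3, h4⟩, h5⟩; exact ⟨h1, h2, h3, h5⟩
  · rintro ⟨h1, h2, h3, h5⟩
    exact ⟨⟨⟨h1, h2⟩, h3, le_trans h5 (le_trans (hlam.1 1 b.1 le_rfl h1) hlam.2.2)⟩, h5⟩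

lemma entry_ge_row (hlam : IsPartitionBounded d c lam) (hT : IsSVT d lam T) :
    ∀ a b x : ℕ, x ∈ T (a, b) → a ≤ x := by
  intro a
  induction a with
  | zero => intro b x _; omega
  | succ a ih =>
    intro b x hx
    have hbox : inDP d lam (a + 1, b) := inDP_of_mem hT hx
    rcases Nat.eq_zero_or_pos a with rfl | hpos
    · exact (hT.2.1 _ hbox x hx).1
    · have hbox' : inDP d lam (a, b) :=
        inDP_mono hlam hbox hpos (by omega) hbox.2.2.1 le_rfl
      obtain ⟨w, hw⟩ := hT.1 _ hbox'
      have h1 := hT.2.2.2.2 a b hbox' hbox w hw x hx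
      have h2 := ih b w hw
      omega


lemma row_le (hT : IsSVT d lam T) :
    ∀ (t a b : ℕ), 0 < t → ∀ u ∈ T (a, b), ∀ v ∈ T (a, b + t), u ≤ v := by
  intro t
  induction t with
  | zero => intro a b h; omega
  | succ s ih =>
    intro a b _ u hu v hv
    rcases Nat.eq_zero_or_pos s with rfl | hs
    · exact hT.2.2.2.1 a b (inDP_of_mem hT hu) (inDP_of_mem hT hv) u hu v hv
    · have hv' : inDP d lam (a, b + s + 1) := inDP_of_mem hT hv
      have hD' : inDP d lam (a, b + s) :=
        ⟨hv'.1, hv'.2.1, by omega, by have := hv'.2.2.2; simp only at this ⊢; omega⟩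
      obtain ⟨w, hw⟩ := hT.1 _ hD'
      have h1 := ih a b hs u hu w hw
      have h2 := hT.2.2.2.1 a (b + s) hD' hv' w hw v hv
      omega

lemma col_lt (hlam : IsPartitionBounded d c lam) (hT : IsSVT d lam T) :
    ∀ (t a b : ℕ), 0 < t → ∀ u ∈ T (a, b), ∀ v ∈ T (a + t, b), u + t ≤ v := by
  intro t
  induction t with
  | zero => intro a b h; omega
  | succ s ih =>
    intro a b _ u hu v hv
    rcases Nat.eq_zero_or_pos s with rfl | hs
    · have := hT.2.2.2.2 a b (inDP_of_mem hT hu) (inDP_of_mem hT hv) u hu v hv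
      omega
    · have hv' : inDP d lam (a + s + 1, b) := inDP_of_mem hT hv
      have hD' : inDP d lam (a + s, b) :=
        inDP_mono hlam hv' (by have := (inDP_of_mem hT hu).1; omega) (by omega)
          hv'.2.2.1 (le_refl b)
      obtain ⟨w, hw⟩ := hT.1 _ hD'
      have h1 := ih a b hs u hu w hw
      have h2 := hT.2.2.2.2 (a + s) b hD' hv' w hw v hv
      omega

/-- key comparison: weakly to the right and below, entries grow by at least the row gap,
strictly for distinct boxes in the weak order. -/
lemma L1 (hlam : IsPartitionBounded d c lam) (hT : IsSVT d lam T) {a b a' b' u v : ℕ}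
    (h1 : a ≤ a') (h2 : b ≤ b') (hne : (a, b) ≠ (a', b'))
    (hu : u ∈ T (a, b)) (hv : v ∈ T (a', b')) : u + a' ≤ v + a := by
  rcases Nat.lt_or_ge a a' with ha | ha
  · obtain ⟨t, rfl⟩ : ∃ t, a' = a + t := ⟨a' - a, by omega⟩
    rcases Nat.lt_or_ge b b' with hb | hb
    · obtain ⟨r, rfl⟩ : ∃ r, b' = b + r := ⟨b' - b, by omega⟩
      have hD' : inDP d lam (a, b + r) :=
        inDP_mono hlam (inDP_of_mem hT hv) (inDP_of_mem hT hu).1 h1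
          (inDP_of_mem hT hv).2.2.1 (le_refl _)
      obtain ⟨w, hw⟩ := hT.1 _ hD'
      have hr : u ≤ w := row_le hT r a b (by omega) u hu w hw
      have hc2 : w + t ≤ v := col_lt hlam hT t a (b + r) (by omega) w hw v hv
      omega
    · have hbb : b = b' := le_antisymm h2 hb
      subst hbb
      have := col_lt hlam hT t a b (by omega) u hu v hv
      omega
  · have haa : a = a' := le_antisymm h1 ha
    subst haa
    have hb : b < b' := by
      rcases Nat.lt_or_ge b b' with h | h
      · exact h
      · exact absurd (by omega : b = b') (fun hq => hne (by rw [hq]))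
    obtain ⟨r, rfl⟩ : ∃ r, b' = b + r := ⟨b' - b, by omega⟩
    have := row_le hT r a b (by omega) u hu v hv
    omega

lemma diag_unique (hlam : IsPartitionBounded d c lam) (hT : IsSVT d lam T)
    {a b a' b' x : ℕ} (h : b' + a = b + a')
    (hu : x ∈ T (a, b)) (hv : x ∈ T (a', b')) : a = a' ∧ b = b' := by
  rcases Nat.lt_trichotomy a a' with ha | ha | ha
  · have := L1 hlam hT (le_of_lt ha) (show b ≤ b' by omega)
      (fun hq => by rw [Prod.ext_iff] at hq; omega) hu hv
    omega
  · exact ⟨ha, by omega⟩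
  · have := L1 hlam hT (le_of_lt ha) (show b' ≤ b by omega)
      (fun hq => by rw [Prod.ext_iff] at hq; omega) hv hu
    omega

lemma mem_fmap_iff (hlam : IsPartitionBounded d c lam) (hT : IsSVT d lam T)
    {p : ℕ × ℕ} :
    p ∈ fmap d c lam T ↔ ∃ a b : ℕ, p.1 ∈ T (a, b) ∧ p.2 + a = p.1 + b := by
  simp only [fmap, Finset.mem_biUnion, Finset.mem_image]
  constructor
  · rintro ⟨bb, hbb, x, hx, rfl⟩
    have hge : bb.1 ≤ x := entry_ge_row hlam hT bb.1 bb.2 x (by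
      convert hx using 2 <;> simp)
    exact ⟨bb.1, bb.2, by convert hx using 2 <;> simp, by simp; omega⟩
  · rintro ⟨a, b, hx, heq⟩
    have hD : inDP d lam (a, b) := inDP_of_mem hT hx
    have hge : a ≤ p.1 := entry_ge_row hlam hT a b p.1 hx
    refine ⟨(a, b), (mem_Dfin_iff hlam).2 hD, p.1, hx, ?_⟩
    have : p.1 + b - a = p.2 := by omega
    simp [this]


lemma entry_succ_le_d (hmu : IsPartitionBounded d c μ) {i j x : ℕ}
    (hbox : inDP d lam (i, j)) (hres : (x + 1) + j ≤ μ (x + 1) + i) : x + 1 ≤ d := by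
  by_contra hc
  have h0 : μ (x + 1) = 0 := hmu.2.1 _ (by omega)
  have := hbox.2.1
  have := hbox.2.2.1
  omega

/-- SVT and restrictedness are preserved by a forward excitation step. -/
lemma step_main (hmu : IsPartitionBounded d c μ)
    (hT : IsSVT d lam T) (hR : RestrictedBy d lam μ T)
    {i j x : ℕ} (hbox : inDP d lam (i, j)) (hx : x ∈ T (i, j)) (hxr : x ∉ T (i, j + 1))
    (hx1 : (x + 1) ∉ T (i, j)) (hx1d : (x + 1) ∉ T (i + 1, j))
    (hres : (x + 1) + j ≤ μ (x + 1) + i)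
    {S : Finset ℕ} (hS1 : ((T (i, j)).erase x) ∪ {x + 1} ⊆ S)
    (hS2 : S ⊆ (T (i, j)) ∪ {x + 1})
    (hT' : T' = Function.update T (i, j) S) :
    IsSVT d lam T' ∧ RestrictedBy d lam μ T' := by
  have hxd : x + 1 ≤ d := entry_succ_le_d hmu hbox hres
  have hmemS : ∀ u ∈ S, u ∈ T (i, j) ∨ u = x + 1 := by
    intro u hu
    have := hS2 hu
    simp only [Finset.mem_union, Finset.mem_singleton] at this
    exact this
  have hx1S : x + 1 ∈ S := hS1 (by simp)
  have happ : ∀ b, T' b = if b = (i, j) then S else T b := by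
    intro b; rw [hT']; exact Function.update_apply T (i, j) S b
  have happ_ne : ∀ b, b ≠ (i, j) → T' b = T b := by
    intro b hb; rw [happ, if_neg hb]
  have happ_eq : T' (i, j) = S := by rw [happ, if_pos rfl]
  refine ⟨⟨?_, ?_, ?_, ?_, ?_⟩, ?_⟩
  · -- nonempty
    intro b hb
    by_cases hbij : b = (i, j)
    · rw [hbij, happ_eq]; exact ⟨x + 1, hx1S⟩
    · rw [happ_ne b hbij]; exact hT.1 b hb
  · -- bounds
    intro b hb u hu
    by_cases hbij : b = (i, j)
    · rw [hbij, happ_eq] at hu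
      rcases hmemS u hu with h | rfl
      · exact hT.2.1 _ hbox u h
      · omega
    · rw [happ_ne b hbij] at hu; exact hT.2.1 b hb u hu
  · -- empty off diagram
    intro b hb
    have hbij : b ≠ (i, j) := fun hq => hb (hq ▸ hbox)
    rw [happ_ne b hbij]; exact hT.2.2.1 b hb
  · -- rows
    intro i' j' hD1 hD2 u hu v hv
    by_cases h1 : (i', j') = (i, j)
    · obtain ⟨hii, hjj⟩ : i' = i ∧ j' = j := by rw [Prod.ext_iff] at h1; exact h1
      have h2 : (i', j' + 1) ≠ (i, j) := by
        simp only [ne_eq, Prod.mk.injEq]; omega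
      rw [h1, happ_eq] at hu
      rw [happ_ne _ h2] at hv
      subst hii; subst hjj
      rcases hmemS u hu with h | rfl
      · exact hT.2.2.2.1 i' j' hD1 hD2 u h v hv
      · have h3 : x ≤ v := hT.2.2.2.1 i' j' hD1 hD2 x hx v hv
        have h4 : v ≠ x := fun hq => hxr (hq ▸ hv)
        omega
    · rw [happ_ne _ h1] at hu
      by_cases h2 : (i', j' + 1) = (i, j)
      · rw [h2, happ_eq] at hv
        obtain ⟨hii, hjj⟩ : i' = i ∧ j' + 1 = j := by rw [Prod.ext_iff] at h2; exact h2
        rcases hmemS v hv with h | rfl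
        · exact hT.2.2.2.1 i' j' hD1 hD2 u hu v (by rw [← hii, ← hjj] at h; exact h)
        · have h3 : u ≤ x := hT.2.2.2.1 i' j' hD1 hD2 u hu x
            (by rw [← hii, ← hjj] at hx; exact hx)
          omega
      · rw [happ_ne _ h2] at hv
        exact hT.2.2.2.1 i' j' hD1 hD2 u hu v hv
  · -- columns
    intro i' j' hD1 hD2 u hu v hv
    by_cases h1 : (i', j') = (i, j)
    · obtain ⟨hii, hjj⟩ : i' = i ∧ j' = j := by rw [Prod.ext_iff] at h1; exact h1
      have h2 : (i' + 1, j') ≠ (i, j) := by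
        simp only [ne_eq, Prod.mk.injEq]; omega
      rw [h1, happ_eq] at hu
      rw [happ_ne _ h2] at hv
      subst hii; subst hjj
      rcases hmemS u hu with h | rfl
      · exact hT.2.2.2.2 i' j' hD1 hD2 u h v hv
      · have h3 : x < v := hT.2.2.2.2 i' j' hD1 hD2 x hx v hv
        have h4 : v ≠ x + 1 := fun hq => hx1d (hq ▸ hv)
        omega
    · rw [happ_ne _ h1] at hu
      by_cases h2 : (i' + 1, j') = (i, j)
      · rw [h2, happ_eq] at hv
        obtain ⟨hii, hjj⟩ : i' + 1 = i ∧ j' = j := by rw [Prod.ext_iff] at h2; exact h2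
        rcases hmemS v hv with h | rfl
        · exact hT.2.2.2.2 i' j' hD1 hD2 u hu v (by rw [← hii, ← hjj] at h; exact h)
        · have h3 : u < x := hT.2.2.2.2 i' j' hD1 hD2 u hu x
            (by rw [← hii, ← hjj] at hx; exact hx)
          omega
      · rw [happ_ne _ h2] at hv
        exact hT.2.2.2.2 i' j' hD1 hD2 u hu v hv
  · -- restricted
    intro i' j' hD u hu
    by_cases h1 : (i', j') = (i, j)
    · rw [h1, happ_eq] at hu
      obtain ⟨hii, hjj⟩ : i' = i ∧ j' = j := by rw [Prod.ext_iff] at h1; exact h1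
      subst hii; subst hjj
      rcases hmemS u hu with h | rfl
      · exact hR i' j' hD u h
      · exact hres
    · rw [happ_ne _ h1] at hu
      exact hR i' j' hD u hu


lemma fmap_type2 (hlam : IsPartitionBounded d c lam) (hT : IsSVT d lam T)
    (hT' : IsSVT d lam T') {i j x k : ℕ} (hx : x ∈ T (i, j)) (hk : k + i = x + j)
    (hup : T' = Function.update T (i, j) ((T (i, j)) ∪ {x + 1})) :
    fmap d c lam T' = fmap d c lam T ∪ {(x + 1, k + 1)} := by
  have hge : i ≤ x := entry_ge_row hlam hT i j x hx
  ext p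
  rw [mem_fmap_iff hlam hT', Finset.mem_union, Finset.mem_singleton,
    mem_fmap_iff hlam hT]
  constructor
  · rintro ⟨a, b, h1, h2⟩
    by_cases hab : (a, b) = (i, j)
    · rw [hab, hup, Function.update_self, Finset.mem_union, Finset.mem_singleton] at h1
      obtain ⟨hii, hjj⟩ : a = i ∧ b = j := by rw [Prod.ext_iff] at hab; exact hab
      subst hii; subst hjj
      rcases h1 with h1 | h1
      · exact Or.inl ⟨a, b, h1, h2⟩
      · refine Or.inr (Prod.ext h1 ?_)
        simp only at h1 ⊢
        omega
    · rw [hup, Function.update_of_ne hab] at h1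
      exact Or.inl ⟨a, b, h1, h2⟩
  · rintro (⟨a, b, h1, h2⟩ | hp)
    · refine ⟨a, b, ?_, h2⟩
      by_cases hab : (a, b) = (i, j)
      · rw [hab, hup, Function.update_self, Finset.mem_union]
        rw [hab] at h1
        exact Or.inl h1
      · rw [hup, Function.update_of_ne hab]; exact h1
    · subst hp
      refine ⟨i, j, ?_, ?_⟩
      · rw [hup, Function.update_self, Finset.mem_union]
        simp
      · simp only
        omega

lemma fmap_type1 (hlam : IsPartitionBounded d c lam) (hT : IsSVT d lam T)
    (hT' : IsSVT d lam T') {i j x k : ℕ} (hx : x ∈ T (i, j)) (hk : k + i = x + j)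
    (hup : T' = Function.update T (i, j) (((T (i, j)).erase x) ∪ {x + 1})) :
    fmap d c lam T' = ((fmap d c lam T).erase (x, k)) ∪ {(x + 1, k + 1)} := by
  have hge : i ≤ x := entry_ge_row hlam hT i j x hx
  ext p
  rw [mem_fmap_iff hlam hT', Finset.mem_union, Finset.mem_singleton, Finset.mem_erase,
    mem_fmap_iff hlam hT]
  constructor
  · rintro ⟨a, b, h1, h2⟩
    by_cases hab : (a, b) = (i, j)
    · rw [hab, hup, Function.update_self, Finset.mem_union, Finset.mem_singleton,
        Finset.mem_erase] at h1
      obtain ⟨hii, hjj⟩ : a = i ∧ b = j := by rw [Prod.ext_iff] at hab; exact hab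
      subst hii; subst hjj
      rcases h1 with ⟨hne, h1⟩ | h1
      · refine Or.inl ⟨?_, a, b, h1, h2⟩
        intro hq
        rw [Prod.ext_iff] at hq
        exact hne (by simp only at hq; omega : p.1 = x)
      · refine Or.inr (Prod.ext h1 ?_)
        simp only at h1 ⊢
        omega
    · rw [hup, Function.update_of_ne hab] at h1
      refine Or.inl ⟨?_, a, b, h1, h2⟩
      intro hq
      obtain ⟨hq1, hq2⟩ : p.1 = x ∧ p.2 = k := by rw [Prod.ext_iff] at hq; exact hq
      rw [hq1] at h1
      rw [hq1, hq2] at h2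
      have := diag_unique hlam hT (by omega : j + a = b + i) h1 hx
      exact hab (by rw [Prod.ext_iff]; exact ⟨this.1, this.2⟩)
  · rintro (⟨hne, a, b, h1, h2⟩ | hp)
    · refine ⟨a, b, ?_, h2⟩
      by_cases hab : (a, b) = (i, j)
      · obtain ⟨hii, hjj⟩ : a = i ∧ b = j := by rw [Prod.ext_iff] at hab; exact hab
        subst hii; subst hjj
        rw [hup, Function.update_self, Finset.mem_union, Finset.mem_erase]
        refine Or.inl ⟨?_, h1⟩
        intro hq
        apply hne
        rw [hq] at h2
        exact Prod.ext hq (by omega)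
      · rw [hup, Function.update_of_ne hab]; exact h1
    · subst hp
      refine ⟨i, j, ?_, ?_⟩
      · rw [hup, Function.update_self, Finset.mem_union]
        simp
      · simp only
        omega

lemma excstep_fwd (hlam : IsPartitionBounded d c lam) (hmu : IsPartitionBounded d c μ)
    (hT : IsSVT d lam T) (hR : RestrictedBy d lam μ T)
    {i j x k : ℕ} (hbox : inDP d lam (i, j)) (hx : x ∈ T (i, j)) (hxr : x ∉ T (i, j + 1))
    (hx1 : (x + 1) ∉ T (i, j)) (hx1d : (x + 1) ∉ T (i + 1, j))
    (hres : (x + 1) + j ≤ μ (x + 1) + i) (hk : k + i = x + j) :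
    (x, k) ∈ fmap d c lam T ∧
    inDP d μ (x + 1, k) ∧ (x + 1, k) ∉ fmap d c lam T ∧
    inDP d μ (x, k + 1) ∧ (x, k + 1) ∉ fmap d c lam T ∧
    inDP d μ (x + 1, k + 1) ∧ (x + 1, k + 1) ∉ fmap d c lam T := by
  have hge : i ≤ x := entry_ge_row hlam hT i j x hx
  have hxd : x + 1 ≤ d := entry_succ_le_d hmu hbox hres
  have hx1' : 1 ≤ x := (hT.2.1 _ hbox x hx).1
  have hi1 : 1 ≤ i := hbox.1
  have hj1 : 1 ≤ j := hbox.2.2.1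
  have hkmu : k + 1 ≤ μ (x + 1) := by omega
  have hmux : μ (x + 1) ≤ μ x := hmu.1 x (x + 1) hx1' (by omega)
  refine ⟨?_, ?_, ?_, ?_, ?_, ?_, ?_⟩
  · exact (mem_fmap_iff hlam hT).2 ⟨i, j, hx, by simp only; omega⟩
  · exact ⟨by omega, hxd, by simp only; omega, by simp only; omega⟩
  · intro hc
    obtain ⟨a, b, hm, he⟩ := (mem_fmap_iff hlam hT).1 hc
    simp only at hm he
    -- he : k + a = (x+1) + b, so b + (i+1) = a + j
    rcases Nat.lt_trichotomy a (i + 1) with ha | ha | ha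
    · have := L1 hlam hT (by omega : a ≤ i) (by omega : b ≤ j)
        (fun hq => by rw [Prod.ext_iff] at hq; omega) hm hx
      omega
    · have : b = j := by omega
      rw [ha, this] at hm
      exact hx1d hm
    · have := L1 hlam hT (by omega : i ≤ a) (by omega : j ≤ b)
        (fun hq => by rw [Prod.ext_iff] at hq; omega) hx hm
      omega
  · exact ⟨by omega, by omega, by omega, by simp only; omega⟩
  · intro hc
    obtain ⟨a, b, hm, he⟩ := (mem_fmap_iff hlam hT).1 hc
    simp only at hm he
    -- he : (k+1) + a = x + b, so b + i = a + j + 1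
    rcases Nat.lt_trichotomy a i with ha | ha | ha
    · have := L1 hlam hT (by omega : a ≤ i) (by omega : b ≤ j)
        (fun hq => by rw [Prod.ext_iff] at hq; omega) hm hx
      omega
    · have : b = j + 1 := by omega
      rw [ha, this] at hm
      exact hxr hm
    · have := L1 hlam hT (by omega : i ≤ a) (by omega : j ≤ b)
        (fun hq => by rw [Prod.ext_iff] at hq; omega) hx hm
      omega
  · exact ⟨by omega, hxd, by omega, by simp only; omega⟩
  · intro hc
    obtain ⟨a, b, hm, he⟩ := (mem_fmap_iff hlam hT).1 hc
    simp only at hm he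
    -- he : (k+1) + a = (x+1) + b, so b + i = a + j
    rcases Nat.lt_trichotomy a i with ha | ha | ha
    · have := L1 hlam hT (by omega : a ≤ i) (by omega : b ≤ j)
        (fun hq => by rw [Prod.ext_iff] at hq; omega) hm hx
      omega
    · have : b = j := by omega
      rw [ha, this] at hm
      exact hx1 hm
    · rcases Nat.lt_or_ge (i + 1) a with ha2 | ha2
      · have := L1 hlam hT (by omega : i ≤ a) (by omega : j ≤ b)
          (fun hq => by rw [Prod.ext_iff] at hq; omega) hx hm
        omega
      · have haa : a = i + 1 := by omega
        have hbb : b = j + 1 := by omega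
        rw [haa, hbb] at hm
        have hD2 : inDP d lam (i + 1, j + 1) := inDP_of_mem hT hm
        have hD3 : inDP d lam (i, j + 1) :=
          inDP_mono hlam hD2 hi1 (by omega) (by omega) (le_refl _)
        obtain ⟨w, hw⟩ := hT.1 _ hD3
        have h4 : x ≤ w := hT.2.2.2.1 i j hbox hD3 x hx w hw
        have h5 : w < x + 1 := hT.2.2.2.2 i (j + 1) hD3 hD2 w hw (x + 1) hm
        have : w = x := by omega
        rw [this] at hw
        exact hxr hw


/-- A forward step preserves the set and induces an excitation step on diagrams. -/
lemma step_all (hlam : IsPartitionBounded d c lam) (hmu : IsPartitionBounded d c μ)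
    (hT : IsSVT d lam T) (hR : RestrictedBy d lam μ T)
    (hstep : SVTStep d lam μ T T') :
    (IsSVT d lam T' ∧ RestrictedBy d lam μ T') ∧
      ExcStepA d μ (fmap d c lam T) (fmap d c lam T') := by
  obtain ⟨i, j, x, hbox, hx, hxr, hx1, hx1d, hres, hcase⟩ := hstep
  have hge : i ≤ x := entry_ge_row hlam hT i j x hx
  set k := x + j - i with hkdef
  have hk : k + i = x + j := by omega
  have hmain : IsSVT d lam T' ∧ RestrictedBy d lam μ T' := by
    rcases hcase with h | h
    · exact step_main hmu hT hR hbox hx hxr hx1 hx1d hres (le_refl _)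
        (Finset.union_subset_union (Finset.erase_subset x _) (le_refl _)) h
    · exact step_main hmu hT hR hbox hx hxr hx1 hx1d hres
        (Finset.union_subset_union (Finset.erase_subset x _) (le_refl _)) (le_refl _) h
  refine ⟨hmain, ?_⟩
  obtain ⟨h1, h2, h3, h4, h5, h6, h7⟩ :=
    excstep_fwd hlam hmu hT hR hbox hx hxr hx1 hx1d hres hk
  refine ⟨x, k, h1, h2, h3, h4, h5, h6, h7, ?_⟩
  rcases hcase with h | h
  · exact Or.inl (fmap_type1 hlam hT hmain.1 hx hk h)
  · exact Or.inr (fmap_type2 hlam hT hmain.1 hx hk h)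

/-- Every excitation step out of `fmap T` lifts to a tableau step. -/
lemma pullback (hlam : IsPartitionBounded d c lam) (hmu : IsPartitionBounded d c μ)
    (hT : IsSVT d lam T) (hR : RestrictedBy d lam μ T) {C' : Finset (ℕ × ℕ)}
    (h : ExcStepA d μ (fmap d c lam T) C') :
    ∃ T', SVTStep d lam μ T T' ∧ fmap d c lam T' = C' := by
  obtain ⟨I, J, hmem, hD1, hn1, hD2, hn2, hD3, hn3, hC'⟩ := h
  obtain ⟨a, b, hx, heq⟩ := (mem_fmap_iff hlam hT).1 hmem
  simp only at hx heq
  have hbox : inDP d lam (a, b) := inDP_of_mem hT hx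
  have hge : a ≤ I := entry_ge_row hlam hT a b I hx
  have hxr : I ∉ T (a, b + 1) := by
    intro hc
    exact hn2 ((mem_fmap_iff hlam hT).2 ⟨a, b + 1, hc, by simp only; omega⟩)
  have hx1 : I + 1 ∉ T (a, b) := by
    intro hc
    exact hn3 ((mem_fmap_iff hlam hT).2 ⟨a, b, hc, by simp only; omega⟩)
  have hx1d : I + 1 ∉ T (a + 1, b) := by
    intro hc
    exact hn1 ((mem_fmap_iff hlam hT).2 ⟨a + 1, b, hc, by simp only; omega⟩)
  have hres : (I + 1) + b ≤ μ (I + 1) + a := by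
    have := hD3.2.2.2
    simp only at this
    omega
  have hk : J + a = I + b := heq
  rcases hC' with hC' | hC'
  · refine ⟨Function.update T (a, b) (((T (a, b)).erase I) ∪ {I + 1}),
      ⟨a, b, I, hbox, hx, hxr, hx1, hx1d, hres, Or.inl rfl⟩, ?_⟩
    have hT' : IsSVT d lam (Function.update T (a, b) (((T (a, b)).erase I) ∪ {I + 1})) :=
      (step_main hmu hT hR hbox hx hxr hx1 hx1d hres (le_refl _)
        (Finset.union_subset_union (Finset.erase_subset I _) (le_refl _)) rfl).1
    rw [fmap_type1 hlam hT hT' hx (show J + a = I + b from hk) rfl, hC']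
  · refine ⟨Function.update T (a, b) ((T (a, b)) ∪ {I + 1}),
      ⟨a, b, I, hbox, hx, hxr, hx1, hx1d, hres, Or.inr rfl⟩, ?_⟩
    have hT' : IsSVT d lam (Function.update T (a, b) ((T (a, b)) ∪ {I + 1})) :=
      (step_main hmu hT hR hbox hx hxr hx1 hx1d hres
        (Finset.union_subset_union (Finset.erase_subset I _) (le_refl _)) (le_refl _) rfl).1
    rw [fmap_type2 hlam hT hT' hx (show J + a = I + b from hk) rfl, hC']


lemma mem_Ttop {b : ℕ × ℕ} {z : ℕ} : z ∈ Ttop d lam b ↔ inDP d lam b ∧ z = b.1 := by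
  unfold Ttop
  by_cases h : inDP d lam b <;> simp [h]

lemma Ttop_isSVT : IsSVT d lam (Ttop d lam) := by
  refine ⟨?_, ?_, ?_, ?_, ?_⟩
  · intro b hb; exact ⟨b.1, mem_Ttop.2 ⟨hb, rfl⟩⟩
  · intro b hb x hx
    obtain ⟨h1, rfl⟩ := mem_Ttop.1 hx
    exact ⟨hb.1, hb.2.1⟩
  · intro b hb; unfold Ttop; rw [if_neg hb]
  · intro i j h1 h2 u hu v hv
    obtain ⟨-, rfl⟩ := mem_Ttop.1 hu
    obtain ⟨-, rfl⟩ := mem_Ttop.1 hv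
    exact le_refl _
  · intro i j h1 h2 u hu v hv
    obtain ⟨-, rfl⟩ := mem_Ttop.1 hu
    obtain ⟨-, rfl⟩ := mem_Ttop.1 hv
    simp

lemma Ttop_restricted (hle : ∀ i, lam i ≤ μ i) :
    RestrictedBy d lam μ (Ttop d lam) := by
  intro i j hD x hx
  obtain ⟨-, hz⟩ := mem_Ttop.1 hx
  simp only at hz
  rw [hz]
  have h1 := hD.2.2.2
  have h2 := hle i
  simp only at h1 ⊢
  omega

lemma fmap_Ttop (hlam : IsPartitionBounded d c lam) :
    fmap d c lam (Ttop d lam) = Dfin d c lam := by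
  ext p
  rw [mem_fmap_iff hlam Ttop_isSVT, mem_Dfin_iff hlam]
  constructor
  · rintro ⟨a, b, hm, he⟩
    obtain ⟨hD, hz⟩ := mem_Ttop.1 hm
    simp only at hz he
    have : p = (a, b) := Prod.ext hz (by omega)
    rw [this]; exact hD
  · intro hD
    refine ⟨p.1, p.2, mem_Ttop.2 ⟨by rwa [Prod.mk.eta], rfl⟩, by omega⟩

/-- weight of a tableau -/
def wt (d c : ℕ) (lam : ℕ → ℕ) (T : ℕ × ℕ → Finset ℕ) : ℕ :=
  ∑ b ∈ Dfin d c lam, (T b).sum id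

lemma wt_update (hlam : IsPartitionBounded d c lam) {key : ℕ × ℕ} (hkey : inDP d lam key)
    (S : Finset ℕ) :
    wt d c lam (Function.update T key S) + (T key).sum id = wt d c lam T + S.sum id := by
  have hmem : key ∈ Dfin d c lam := (mem_Dfin_iff hlam).2 hkey
  unfold wt
  rw [← Finset.sum_erase_add _ _ hmem, ← Finset.sum_erase_add _ _ hmem]
  have h1 : ∑ b ∈ (Dfin d c lam).erase key, (Function.update T key S b).sum id =
      ∑ b ∈ (Dfin d c lam).erase key, (T b).sum id := by
    apply Finset.sum_congr rfl
    intro b hb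
    rw [Function.update_of_ne (Finset.ne_of_mem_erase hb)]
  rw [h1, Function.update_self]
  ring


lemma isSVT_of_subset (hT : IsSVT d lam T) {T₀ : ℕ × ℕ → Finset ℕ}
    (hsub : ∀ b, T₀ b ⊆ T b) (hne : ∀ b, inDP d lam b → (T₀ b).Nonempty) :
    IsSVT d lam T₀ := by
  refine ⟨hne, ?_, ?_, ?_, ?_⟩
  · intro b hb x hx; exact hT.2.1 b hb x (hsub b hx)
  · intro b hb
    have := hT.2.2.1 b hb
    exact Finset.subset_empty.1 (this ▸ hsub b)
  · intro i j h1 h2 u hu v hv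
    exact hT.2.2.2.1 i j h1 h2 u (hsub _ hu) v (hsub _ hv)
  · intro i j h1 h2 u hu v hv
    exact hT.2.2.2.2 i j h1 h2 u (hsub _ hu) v (hsub _ hv)

lemma reverse_move (hlam : IsPartitionBounded d c lam) (hmu : IsPartitionBounded d c μ)
    (hT : IsSVT d lam T) (hR : RestrictedBy d lam μ T) (hne : T ≠ Ttop d lam) :
    ∃ T₀, IsSVT d lam T₀ ∧ RestrictedBy d lam μ T₀ ∧ SVTStep d lam μ T₀ T ∧
      wt d c lam T₀ < wt d c lam T := by
  classical
  set Y : Finset ℕ :=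
    (Dfin d c lam).biUnion (fun b => (T b).filter (fun y => b.1 < y)) with hYdef
  have hmemY : ∀ z : ℕ, z ∈ Y ↔ ∃ b, b ∈ Dfin d c lam ∧ z ∈ T b ∧ b.1 < z := by
    intro z
    simp only [hYdef, Finset.mem_biUnion, Finset.mem_filter]
  have hYne : Y.Nonempty := by
    obtain ⟨b, hb⟩ := Function.ne_iff.1 hne
    by_cases hD : inDP d lam b
    · have hTtop : Ttop d lam b = {b.1} := if_pos hD
      have : ∃ z ∈ T b, b.1 < z := by
        by_contra hcon
        push_neg at hcon
        apply hb
        rw [hTtop]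
        refine Finset.eq_singleton_iff_nonempty_unique_mem.2 ⟨hT.1 b hD, ?_⟩
        intro z hz
        have h1 := hcon z hz
        have h2 : b.1 ≤ z := entry_ge_row hlam hT b.1 b.2 z (by rwa [Prod.mk.eta])
        omega
      obtain ⟨z, hz, hlt⟩ := this
      exact ⟨z, (hmemY z).2 ⟨b, (mem_Dfin_iff hlam).2 hD, hz, hlt⟩⟩
    · exact absurd ((hT.2.2.1 b hD).trans (if_neg hD).symm) hb
  set y := Y.min' hYne with hy
  have hymem : y ∈ Y := Finset.min'_mem Y hYne
  have hymin : ∀ z ∈ Y, y ≤ z := fun z hz => Finset.min'_le Y z hz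
  obtain ⟨bb, hbbD, hybb, hblt⟩ := (hmemY y).1 hymem
  set a := bb.1 with ha
  have hybb' : y ∈ T (a, bb.2) := by rwa [Prod.mk.eta]
  have hfind : ∃ m, y ∈ T (a, m) := ⟨bb.2, hybb'⟩
  set b0 := Nat.find hfind with hb0def
  have hb0 : y ∈ T (a, b0) := Nat.find_spec hfind
  have hminb : ∀ m, m < b0 → y ∉ T (a, m) := fun m hm => Nat.find_min hfind hm
  have hbox0 : inDP d lam (a, b0) := inDP_of_mem hT hb0
  have hgea : a ≤ y := le_of_lt hblt
  obtain ⟨x, hxy⟩ : ∃ x, y = x + 1 := ⟨y - 1, by omega⟩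
  have hax : a ≤ x := by omega
  have hyd : y ≤ d := (hT.2.1 _ hbox0 y hb0).2
  -- common step conditions
  have cond_right : x ∉ T (a, b0 + 1) := by
    intro hc
    have := hT.2.2.2.1 a b0 hbox0 (inDP_of_mem hT hc) y hb0 x hc
    omega
  have cond_below : (x + 1) ∉ T (a + 1, b0) := by
    intro hc
    have := hT.2.2.2.2 a b0 hbox0 (inDP_of_mem hT hc) y hb0 (x + 1) hc
    omega
  have hres : (x + 1) + b0 ≤ μ (x + 1) + a := by
    have := hR a b0 hbox0 y hb0
    rw [hxy] at this
    exact this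
  have hb0' : x + 1 ∈ T (a, b0) := hxy ▸ hb0
  have ha1 : 1 ≤ a := hbox0.1
  have hb01 : 1 ≤ b0 := hbox0.2.2.1
  by_cases hcx : x ∈ T (a, b0)
  · -- type 2 reverse: remove x+1 from the box
    refine ⟨Function.update T (a, b0) ((T (a, b0)).erase (x + 1)), ?_, ?_, ?_, ?_⟩
    · refine isSVT_of_subset hT ?_ ?_
      · intro b
        by_cases hbe : b = ((a : ℕ), (b0 : ℕ))
        · rw [hbe, Function.update_self]; exact Finset.erase_subset _ _
        · rw [Function.update_of_ne hbe]
      · intro b hb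
        by_cases hbe : b = ((a : ℕ), (b0 : ℕ))
        · rw [hbe, Function.update_self]
          exact ⟨x, Finset.mem_erase.2 ⟨by omega, hcx⟩⟩
        · rw [Function.update_of_ne hbe]; exact hT.1 b hb
    · intro i j hD u hu
      by_cases hbe : ((i : ℕ), (j : ℕ)) = ((a : ℕ), (b0 : ℕ))
      · obtain ⟨hii, hjj⟩ : i = a ∧ j = b0 := by rw [Prod.ext_iff] at hbe; exact hbe
        rw [hbe, Function.update_self] at hu
        refine hR i j hD u ?_
        rw [hii, hjj]
        exact Finset.mem_of_mem_erase hu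
      · rw [Function.update_of_ne hbe] at hu
        exact hR i j hD u hu
    · refine ⟨a, b0, x, hbox0, ?_, ?_, ?_, ?_, hres, Or.inr ?_⟩
      · rw [Function.update_self]
        exact Finset.mem_erase.2 ⟨by omega, hcx⟩
      · rw [Function.update_of_ne (by simp only [ne_eq, Prod.mk.injEq]; omega)]
        exact cond_right
      · rw [Function.update_self]
        exact fun hc => absurd rfl (Finset.mem_erase.1 hc).1
      · rw [Function.update_of_ne (by simp only [ne_eq, Prod.mk.injEq]; omega)]
        exact cond_below
      · funext b
        by_cases hbe : b = ((a : ℕ), (b0 : ℕ))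
        · rw [hbe, Function.update_self, Function.update_self]
          ext z
          simp only [Finset.mem_union, Finset.mem_erase, Finset.mem_singleton]
          constructor
          · intro hz
            by_cases hz1 : z = x + 1
            · exact Or.inr hz1
            · exact Or.inl ⟨hz1, hz⟩
          · rintro (⟨h1, h2⟩ | rfl)
            · exact h2
            · exact hb0'
        · rw [Function.update_of_ne hbe, Function.update_of_ne hbe]
    · have h1 := wt_update (T := T) hlam hbox0 ((T (a, b0)).erase (x + 1))
      have h2 := Finset.sum_erase_add (T (a, b0)) id hb0'
      simp only [id] at h1 h2
      omega
  · -- type 1 reverse: replace x+1 by x in the box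
    set S : Finset ℕ := ((T (a, b0)).erase (x + 1)) ∪ {x} with hSdef
    have hmemS : ∀ u, u ∈ S ↔ ((u ≠ x + 1 ∧ u ∈ T (a, b0)) ∨ u = x) := by
      intro u
      simp only [hSdef, Finset.mem_union, Finset.mem_erase, Finset.mem_singleton]
    have hxS : x ∈ S := (hmemS x).2 (Or.inr rfl)
    set T₀ := Function.update T (a, b0) S with hT₀def
    have happ_eq : T₀ (a, b0) = S := Function.update_self _ _ _
    have happ_ne : ∀ b, b ≠ ((a : ℕ), (b0 : ℕ)) → T₀ b = T b := by
      intro b hb; exact Function.update_of_ne hb _ _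
    have hT₀svt : IsSVT d lam T₀ := by
      refine ⟨?_, ?_, ?_, ?_, ?_⟩
      · intro b hb
        by_cases hbe : b = ((a : ℕ), (b0 : ℕ))
        · rw [hbe, happ_eq]; exact ⟨x, hxS⟩
        · rw [happ_ne b hbe]; exact hT.1 b hb
      · intro b hb u hu
        by_cases hbe : b = ((a : ℕ), (b0 : ℕ))
        · rw [hbe, happ_eq] at hu
          rcases (hmemS u).1 hu with ⟨-, h⟩ | h
          · exact hT.2.1 _ hbox0 u h
          · exact ⟨by omega, by omega⟩
        · rw [happ_ne b hbe] at hu; exact hT.2.1 b hb u hu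
      · intro b hb
        have hbe : b ≠ ((a : ℕ), (b0 : ℕ)) := fun hq => hb (hq ▸ hbox0)
        rw [happ_ne b hbe]; exact hT.2.2.1 b hb
      · -- rows
        intro i j hD1 hD2 u hu v hv
        by_cases h1 : ((i : ℕ), (j : ℕ)) = ((a : ℕ), (b0 : ℕ))
        · obtain ⟨hii, hjj⟩ : i = a ∧ j = b0 := by rw [Prod.ext_iff] at h1; exact h1
          have h2 : ((i : ℕ), (j + 1 : ℕ)) ≠ ((a : ℕ), (b0 : ℕ)) := by
            simp only [ne_eq, Prod.mk.injEq]; omega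
          rw [h1, happ_eq] at hu
          rw [happ_ne _ h2] at hv
          rcases (hmemS u).1 hu with ⟨-, h⟩ | h
          · exact hT.2.2.2.1 i j hD1 hD2 u (by rw [hii, hjj]; exact h) v hv
          · have := hT.2.2.2.1 i j hD1 hD2 (x + 1) (by rw [hii, hjj]; exact hb0') v hv
            omega
        · rw [happ_ne _ h1] at hu
          by_cases h2 : ((i : ℕ), (j + 1 : ℕ)) = ((a : ℕ), (b0 : ℕ))
          · obtain ⟨hii, hjj⟩ : i = a ∧ j + 1 = b0 := by rw [Prod.ext_iff] at h2; exact h2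
            rw [h2, happ_eq] at hv
            rcases (hmemS v).1 hv with ⟨-, h⟩ | h
            · exact hT.2.2.2.1 i j hD1 hD2 u hu v (by rw [hii, hjj]; exact h)
            · have h3 := hT.2.2.2.1 i j hD1 hD2 u hu (x + 1)
                (by rw [hii, hjj]; exact hb0')
              have h4 : u ≠ x + 1 := by
                intro hq
                refine hminb j (by omega) ?_
                rw [hxy, ← hq, ← hii]
                exact hu
              omega
          · rw [happ_ne _ h2] at hv
            exact hT.2.2.2.1 i j hD1 hD2 u hu v hv
      · -- cols
        intro i j hD1 hD2 u hu v hv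
        by_cases h1 : ((i : ℕ), (j : ℕ)) = ((a : ℕ), (b0 : ℕ))
        · obtain ⟨hii, hjj⟩ : i = a ∧ j = b0 := by rw [Prod.ext_iff] at h1; exact h1
          have h2 : ((i + 1 : ℕ), (j : ℕ)) ≠ ((a : ℕ), (b0 : ℕ)) := by
            simp only [ne_eq, Prod.mk.injEq]; omega
          rw [h1, happ_eq] at hu
          rw [happ_ne _ h2] at hv
          rcases (hmemS u).1 hu with ⟨-, h⟩ | h
          · exact hT.2.2.2.2 i j hD1 hD2 u (by rw [hii, hjj]; exact h) v hv
          · have := hT.2.2.2.2 i j hD1 hD2 (x + 1) (by rw [hii, hjj]; exact hb0') v hv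
            omega
        · rw [happ_ne _ h1] at hu
          by_cases h2 : ((i + 1 : ℕ), (j : ℕ)) = ((a : ℕ), (b0 : ℕ))
          · obtain ⟨hii, hjj⟩ : i + 1 = a ∧ j = b0 := by rw [Prod.ext_iff] at h2; exact h2
            rw [h2, happ_eq] at hv
            rcases (hmemS v).1 hv with ⟨-, h⟩ | h
            · exact hT.2.2.2.2 i j hD1 hD2 u hu v (by rw [hii, hjj]; exact h)
            · have h3 := hT.2.2.2.2 i j hD1 hD2 u hu (x + 1)
                (by rw [hii, hjj]; exact hb0')
              have h4 : u ≠ x := by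
                intro hq
                have hxYmem : x ∈ Y := (hmemY x).2
                  ⟨(i, j), (mem_Dfin_iff hlam).2 hD1, hq ▸ hu, by simp only; omega⟩
                have := hymin x hxYmem
                omega
              omega
          · rw [happ_ne _ h2] at hv
            exact hT.2.2.2.2 i j hD1 hD2 u hu v hv
    have hT₀res : RestrictedBy d lam μ T₀ := by
      intro i j hD u hu
      by_cases h1 : ((i : ℕ), (j : ℕ)) = ((a : ℕ), (b0 : ℕ))
      · obtain ⟨hii, hjj⟩ : i = a ∧ j = b0 := by rw [Prod.ext_iff] at h1; exact h1
        rw [h1, happ_eq] at hu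
        rcases (hmemS u).1 hu with ⟨-, h⟩ | h
        · exact hR i j hD u (by rw [hii, hjj]; exact h)
        · have hmm : μ (u + 1) ≤ μ u := hmu.1 u (u + 1) (by omega) (by omega)
          have hres' : (u + 1) + b0 ≤ μ (u + 1) + a := by rw [h]; exact hres
          omega
      · rw [happ_ne _ h1] at hu
        exact hR i j hD u hu
    refine ⟨T₀, hT₀svt, hT₀res, ⟨a, b0, x, hbox0, ?_, ?_, ?_, ?_, hres, Or.inl ?_⟩, ?_⟩
    · rw [happ_eq]; exact hxS
    · rw [happ_ne _ (by simp only [ne_eq, Prod.mk.injEq]; omega)]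
      exact cond_right
    · rw [happ_eq]
      intro hc
      rcases (hmemS (x + 1)).1 hc with ⟨h, -⟩ | h
      · exact h rfl
      · omega
    · rw [happ_ne _ (by simp only [ne_eq, Prod.mk.injEq]; omega)]
      exact cond_below
    · funext b
      by_cases hbe : b = ((a : ℕ), (b0 : ℕ))
      · rw [hbe, Function.update_self, happ_eq]
        ext z
        simp only [hSdef, Finset.mem_union, Finset.mem_erase, Finset.mem_singleton]
        constructor
        · intro hz
          by_cases hz1 : z = x + 1
          · exact Or.inr hz1
          · exact Or.inl ⟨fun hq => hcx (hq ▸ hz), Or.inl ⟨hz1, hz⟩⟩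
        · rintro (⟨h1, (⟨h2, h3⟩ | h2)⟩ | h1)
          · exact h3
          · exact absurd h2 h1
          · rw [h1]; exact hb0'
      · rw [Function.update_of_ne hbe, happ_ne b hbe]
    · have h1 := wt_update (T := T) hlam hbox0 S
      have h2 := Finset.sum_erase_add (T (a, b0)) id hb0'
      have h3 : S.sum id = ((T (a, b0)).erase (x + 1)).sum id + x := by
        rw [hSdef, Finset.sum_union (by
          simp only [Finset.disjoint_singleton_right, Finset.mem_erase]
          exact fun hc => hcx hc.2)]
        simp
      simp only [id] at h1 h2 h3
      rw [← hT₀def] at h1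
      omega


lemma reach (hlam : IsPartitionBounded d c lam) (hmu : IsPartitionBounded d c μ) :
    ∀ N T, wt d c lam T ≤ N → IsSVT d lam T → RestrictedBy d lam μ T →
      Relation.ReflTransGen (SVTStep d lam μ) (Ttop d lam) T := by
  intro N
  induction N with
  | zero =>
    intro T hw hT hR
    by_cases h : T = Ttop d lam
    · rw [h]
    · obtain ⟨T₀, -, -, -, hlt⟩ := reverse_move hlam hmu hT hR h
      omega
  | succ N ih =>
    intro T hw hT hR
    by_cases h : T = Ttop d lam
    · rw [h]
    · obtain ⟨T₀, h1, h2, h3, hlt⟩ := reverse_move hlam hmu hT hR h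
      exact (ih T₀ (by omega) h1 h2).tail h3

lemma fwd_chain (hlam : IsPartitionBounded d c lam) (hmu : IsPartitionBounded d c μ)
    (hle : ∀ i, lam i ≤ μ i) :
    ∀ T, Relation.ReflTransGen (SVTStep d lam μ) (Ttop d lam) T →
      (IsSVT d lam T ∧ RestrictedBy d lam μ T) ∧
        Relation.ReflTransGen (ExcStepA d μ) (Dfin d c lam) (fmap d c lam T) := by
  intro T h
  induction h with
  | refl =>
    refine ⟨⟨Ttop_isSVT, Ttop_restricted hle⟩, ?_⟩
    rw [fmap_Ttop hlam]
  | @tail T1 T2 hchain hstep ih =>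
    obtain ⟨⟨h1, h2⟩, h3⟩ := ih
    obtain ⟨h4, h5⟩ := step_all hlam hmu h1 h2 hstep
    exact ⟨h4, h3.tail h5⟩

/-- Core of injectivity: with knowledge of agreement on the next diagonal,
`T` and `T'` agree on a given box. -/
lemma inj_core (hlam : IsPartitionBounded d c lam) (hT : IsSVT d lam T)
    (hT' : IsSVT d lam T') (hf : fmap d c lam T = fmap d c lam T')
    {a b : ℕ} (hD : inDP d lam (a, b))
    (hup : inDP d lam (a + 1, b + 1) → T (a, b + 1) = T' (a, b + 1))
    (hdn : ∀ a0 b1, a = a0 + 1 → b = b1 + 1 → inDP d lam (a0, b1) →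
      T (a0, b) = T' (a0, b)) :
    T (a, b) ⊆ T' (a, b) := by
  intro v hv
  have hge : a ≤ v := entry_ge_row hlam hT a b v hv
  have hp : (v, v + b - a) ∈ fmap d c lam T :=
    (mem_fmap_iff hlam hT).2 ⟨a, b, hv, by simp only; omega⟩
  rw [hf] at hp
  obtain ⟨a', b', hv', he'⟩ := (mem_fmap_iff hlam hT').1 hp
  simp only at hv' he'
  -- he' : (v + b - a) + a' = v + b', hence b' + a = b + a'
  have hdiag : b' + a = b + a' := by omega
  have hD' : inDP d lam (a', b') := inDP_of_mem hT' hv'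
  have hD'1 : 1 ≤ a' := hD'.1
  have hD'2 : a' ≤ d := hD'.2.1
  have hD'3 : 1 ≤ b' := hD'.2.2.1
  have hD'4 : b' ≤ lam a' := hD'.2.2.2
  have hDa : 1 ≤ a := hD.1
  have hDd : a ≤ d := hD.2.1
  have hDb : 1 ≤ b := hD.2.2.1
  have hDl : b ≤ lam a := hD.2.2.2
  rcases Nat.lt_trichotomy a' a with ha | ha | ha
  · obtain ⟨a0, rfl⟩ : ∃ a0, a = a0 + 1 := ⟨a - 1, by omega⟩
    obtain ⟨b1, rfl⟩ : ∃ b1, b = b1 + 1 := ⟨b - 1, by omega⟩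
    have h5 : b1 + 1 ≤ lam a0 :=
      le_trans hDl (hlam.1 a0 (a0 + 1) (by omega) (by omega))
    have hDm : inDP d lam (a0, b1) :=
      ⟨by omega, by omega, by omega, (by omega : b1 ≤ lam a0)⟩
    have heq2 := hdn a0 b1 rfl rfl hDm
    have hDmid : inDP d lam (a0, b1 + 1) := ⟨by omega, by omega, by omega, h5⟩
    obtain ⟨w, hw⟩ := hT.1 _ hDmid
    have h6 : w < v := hT.2.2.2.2 a0 (b1 + 1) hDmid hD w hw v hv
    have hw' : w ∈ T' (a0, b1 + 1) := heq2 ▸ hw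
    have h7 := L1 hlam hT' (show a' ≤ a0 by omega) (show b' ≤ b1 + 1 by omega)
      (fun hq => by rw [Prod.ext_iff] at hq; omega) hv' hw'
    omega
  · have hbb : b' = b := by omega
    rw [ha, hbb] at hv'
    exact hv'
  · have hDup : inDP d lam (a + 1, b + 1) := by
      refine ⟨by omega, by omega, by omega, ?_⟩
      calc b + 1 ≤ b' := by omega
        _ ≤ lam a' := hD'4
        _ ≤ lam (a + 1) := hlam.1 (a + 1) a' (by omega) (by omega)
    have heq2 := hup hDup
    have hDup' : b + 1 ≤ lam (a + 1) := hDup.2.2.2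
    have hDmid : inDP d lam (a, b + 1) :=
      ⟨hD.1, hD.2.1, by omega, le_trans hDup' (hlam.1 a (a + 1) hD.1 (by omega))⟩
    obtain ⟨w, hw⟩ := hT.1 _ hDmid
    have h6 : v ≤ w := hT.2.2.2.1 a b hD hDmid v hv w hw
    have hw' : w ∈ T' (a, b + 1) := heq2 ▸ hw
    have h7 := L1 hlam hT' (show a ≤ a' by omega) (show b + 1 ≤ b' by omega)
      (fun hq => by rw [Prod.ext_iff] at hq; omega) hw' hv'
    omega

lemma fmap_injective (hlam : IsPartitionBounded d c lam) (hT : IsSVT d lam T)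
    (hT' : IsSVT d lam T') (hf : fmap d c lam T = fmap d c lam T') : T = T' := by
  have key : ∀ t a b : ℕ, (c - b) + a = t → T (a, b) = T' (a, b) := by
    intro t
    induction t using Nat.strong_induction_on with
    | _ t ih =>
      intro a b ht
      by_cases hD : inDP d lam (a, b)
      · have hbc : b ≤ c := by
          have h1 : lam a ≤ lam 1 := hlam.1 1 a le_rfl hD.1
          have h2 : b ≤ lam a := hD.2.2.2
          have h3 := hlam.2.2
          omega
        have hup : inDP d lam (a + 1, b + 1) → T (a, b + 1) = T' (a, b + 1) := by
          intro hDup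
          have hb1c : b + 1 ≤ c := by
            have h1 : lam (a + 1) ≤ lam 1 := hlam.1 1 (a + 1) le_rfl (by omega)
            have h2 : b + 1 ≤ lam (a + 1) := hDup.2.2.2
            have h3 := hlam.2.2
            omega
          exact ih ((c - (b + 1)) + a) (by omega) a (b + 1) rfl
        have hdn : ∀ a0 b1, a = a0 + 1 → b = b1 + 1 → inDP d lam (a0, b1) →
            T (a0, b) = T' (a0, b) :=
          fun a0 b1 ha0 hb1 _ => ih ((c - b) + a0) (by omega) a0 b rfl
        have hdn' : ∀ a0 b1, a = a0 + 1 → b = b1 + 1 → inDP d lam (a0, b1) →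
            T' (a0, b) = T (a0, b) :=
          fun a0 b1 ha0 hb1 h => (hdn a0 b1 ha0 hb1 h).symm
        refine Finset.Subset.antisymm
          (inj_core hlam hT hT' hf hD hup hdn)
          (inj_core hlam hT' hT hf.symm hD (fun h => (hup h).symm) hdn')
      · rw [hT.2.2.1 _ hD, hT'.2.2.1 _ hD]
  funext b
  exact Prod.mk.eta (p := b) ▸ key ((c - b.2) + b.1) b.1 b.2 rfl

end SVTProof

/-- The map `f(T) = {(x, x+j−i) : (i,j) ∈ D_lam, x ∈ T(i,j)}` is a bijection from the set
of set-valued tableaux of shape `lam` restricted by `μ` onto the set of excited Young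
diagrams of `D_lam` in `D_μ`. -/
theorem stmt_14 (n d : ℕ) (hd : 0 < d) (hdn : d < n) (lam μ : ℕ → ℕ)
    (hlam : IsPartitionBounded d (n - d) lam) (hμ : IsPartitionBounded d (n - d) μ)
    (hle : ∀ i, lam i ≤ μ i) :
    Set.BijOn (fmap d (n - d) lam)
      {T | IsSVT d lam T ∧ RestrictedBy d lam μ T}
      {C | Relation.ReflTransGen (ExcStepA d μ) (Dfin d (n - d) lam) C} := by
  classical
  set c := n - d with hc
  refine ⟨?_, ?_, ?_⟩
  · -- MapsTo
    rintro T ⟨hT, hR⟩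
    have hchain := SVTProof.reach hlam hμ (SVTProof.wt d c lam T) T le_rfl hT hR
    exact (SVTProof.fwd_chain hlam hμ hle T hchain).2
  · -- InjOn
    rintro T ⟨hT, -⟩ T' ⟨hT', -⟩ hf
    exact SVTProof.fmap_injective hlam hT hT' hf
  · -- SurjOn
    intro C hC
    simp only [Set.mem_setOf_eq] at hC
    induction hC with
    | refl =>
      exact ⟨Ttop d lam, ⟨SVTProof.Ttop_isSVT, SVTProof.Ttop_restricted hle⟩,
        SVTProof.fmap_Ttop hlam⟩
    | @tail C1 C2 hchain hstep ih =>
      obtain ⟨T, ⟨hT, hR⟩, hfT⟩ := ih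
      rw [← hfT] at hstep
      obtain ⟨T', hstep', hfT'⟩ := SVTProof.pullback hlam hμ hT hR hstep
      have := (SVTProof.step_all hlam hμ hT hR hstep').1
      exact ⟨T', ⟨this.1, this.2⟩, hfT'⟩
end

section
/- Fix n ≥ 2 and let λ = (λ_1 > ⋯ > λ_r > 0) be a strict partition with r ≤ n−1 and λ_1 ≤ n−1. Suppose w ∈ S_{2n} is symmetric with w(1) < ⋯ < w(n) and whose type-D strict partition λ'_w equals λ, and suppose u ∈ S_{2n−2} is symmetric with u(1) < ⋯ < u(n−1) and whose type-B strict partition λ'_u equals λ. Then for every m ∈ {1,…,n−1}: m ∈ {w(1),…,w(n)} if and only if m ∈ {u(1),…,u(n−1)}, and 2n+1−m ∈ {w(1),…,w(n)} if and only if 2n−1−m ∈ {u(1),…,u(n−1)}. Equivalently, removing the entries n and n+1 from (w(1),…,w(n)) and replacing each entry of the form 2n+1−m (with 1 ≤ m ≤ n−1) by 2n−1−m yields exactly the set {u(1),…,u(n−1)}. -/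
/-- `μ` is a strict partition with exactly `r` (positive, strictly decreasing) parts. -/
def IsStrictPartition (r : ℕ) (μ : ℕ → ℕ) : Prop :=
  (∀ i : ℕ, 1 ≤ i → i < r → μ (i + 1) < μ i) ∧
  (∀ i : ℕ, 1 ≤ i → i ≤ r → 0 < μ i) ∧
  (∀ i : ℕ, r < i → μ i = 0)

/-!
Both shapes read off the entries of the first half that lie above the middle:
`(λ'_w)_{n+1-k} = max (w(k) - (n+1), 0)` for `2 ≤ k ≤ n`, and
`(λ'_u)_{n-k} = max (u(k) - (n-1), 0)` for `1 ≤ k ≤ n-1`.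
Hence `2n+1-m` occurs among `w(1),…,w(n)` iff `n-m` is a part of `λ` iff `2n-1-m` occurs among
`u(1),…,u(n-1)`; position `1` of `w` cannot hold such a value, since `w(1) < ⋯ < w(n) ≤ 2n`.
For the small values, symmetry shows that `m` occurs in the first half of a symmetric permutation
of `{1,…,2N}` exactly when its mirror image does not.
-/

lemma permVal1_bounds {M : ℕ} (v : Equiv.Perm (Fin M)) {k : ℕ} (h1 : 1 ≤ k) (h2 : k ≤ M) :
    1 ≤ permVal1 v k ∧ permVal1 v k ≤ M := by
  rw [permVal1, dif_pos ⟨h1, h2⟩]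
  exact ⟨Nat.le_add_left 1 _, (v _).isLt⟩

lemma permVal1_injective {M : ℕ} (v : Equiv.Perm (Fin M)) {k k' : ℕ}
    (h1 : 1 ≤ k) (h2 : k ≤ M) (h1' : 1 ≤ k') (h2' : k' ≤ M)
    (h : permVal1 v k = permVal1 v k') : k = k' := by
  rw [permVal1, permVal1, dif_pos ⟨h1, h2⟩, dif_pos ⟨h1', h2'⟩] at h
  have hv : v ⟨k - 1, by omega⟩ = v ⟨k' - 1, by omega⟩ := Fin.ext (by omega)
  have := Fin.mk.inj_iff.mp (v.injective hv)
  omega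

lemma exists_permVal1_eq {M : ℕ} (v : Equiv.Perm (Fin M)) {m : ℕ}
    (h1 : 1 ≤ m) (h2 : m ≤ M) :
    ∃ k : ℕ, 1 ≤ k ∧ k ≤ M ∧ permVal1 v k = m := by
  set k := v.symm ⟨m - 1, by omega⟩ with hk
  refine ⟨k.val + 1, Nat.le_add_left 1 _, k.isLt, ?_⟩
  rw [permVal1, dif_pos ⟨Nat.succ_pos _, k.isLt⟩]
  simp only [Nat.add_sub_cancel, Fin.eta, hk, Equiv.apply_symm_apply]
  omega

lemma permVal1_add_le_of_increasing {M N : ℕ} (v : Equiv.Perm (Fin M))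
    (hincr : ∀ i j : ℕ, 1 ≤ i → i < j → j ≤ N → permVal1 v i < permVal1 v j) :
    ∀ k : ℕ, 1 ≤ k → k ≤ N → permVal1 v 1 + (k - 1) ≤ permVal1 v k
  | 0, h, _ => absurd h (by omega)
  | 1, _, _ => le_rfl
  | k + 2, _, hk => by
    have := permVal1_add_le_of_increasing v hincr (k + 1) (by omega) (by omega)
    have := hincr (k + 1) (k + 2) (by omega) (by omega) hk
    omega

lemma exists_permVal1_eq_iff_not_exists_reflect {M N : ℕ} (v : Equiv.Perm (Fin M))
    (hMN : M = 2 * N)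
    (hsym : ∀ x : ℕ, 1 ≤ x → x ≤ M → permVal1 v (M + 1 - x) = M + 1 - permVal1 v x)
    {m : ℕ} (hm1 : 1 ≤ m) (hmM : m ≤ M) :
    (∃ k : ℕ, 1 ≤ k ∧ k ≤ N ∧ permVal1 v k = m) ↔
      ¬ ∃ k : ℕ, 1 ≤ k ∧ k ≤ N ∧ permVal1 v k = M + 1 - m := by
  constructor
  · rintro ⟨k, hk1, hkN, rfl⟩ ⟨k', hk1', hkN', hk'⟩
    have hmirror : permVal1 v (M + 1 - k) = permVal1 v k' :=
      (hsym k hk1 (by omega)).trans hk'.symm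
    have := permVal1_injective v (by omega) (by omega) hk1' (by omega) hmirror
    omega
  · intro hmirror
    obtain ⟨k, hk1, hkM, rfl⟩ := exists_permVal1_eq v hm1 hmM
    by_cases hkN : k ≤ N
    · exact ⟨k, hk1, hkN, rfl⟩
    · refine absurd ⟨M + 1 - k, by omega, by omega, ?_⟩ hmirror
      rw [hsym k hk1 hkM]

lemma exists_permVal1_eq_typeD_iff {n : ℕ} (lam : ℕ → ℕ) (w : Equiv.Perm (Fin (2 * n)))
    (hwincr : ∀ i j : ℕ, 1 ≤ i → i < j → j ≤ n → permVal1 w i < permVal1 w j)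
    (hwshape : ∀ i : ℕ, 1 ≤ i → i ≤ n - 1 →
      ((permVal1 w (n + 1 - i) : ℤ) - ((n + 1 - i : ℕ) : ℤ) - (i : ℤ)).toNat = lam i)
    {m : ℕ} (hm1 : 1 ≤ m) (hm2 : m ≤ n - 1) :
    (∃ k : ℕ, 1 ≤ k ∧ k ≤ n ∧ permVal1 w k = 2 * n + 1 - m) ↔
      ∃ i : ℕ, 1 ≤ i ∧ i ≤ n - 1 ∧ lam i = n - m := by
  constructor
  · rintro ⟨k, hk1, hkn, hkv⟩
    have hfirst : permVal1 w 1 + (n - 1) ≤ permVal1 w n :=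
      permVal1_add_le_of_increasing w hwincr n (by omega) le_rfl
    have hlast := permVal1_bounds w (k := n) (by omega) (by omega)
    have hk2 : 2 ≤ k := by
      by_contra hk
      obtain rfl : k = 1 := by omega
      omega
    have hsh := hwshape (n + 1 - k) (by omega) (by omega)
    rw [show n + 1 - (n + 1 - k) = k by omega] at hsh
    exact ⟨n + 1 - k, by omega, by omega, by omega⟩
  · rintro ⟨i, hi1, hin, hival⟩
    have hsh := hwshape i hi1 hin
    exact ⟨n + 1 - i, by omega, by omega, by omega⟩

lemma exists_permVal1_eq_typeB_iff {n : ℕ} (lam : ℕ → ℕ) (u : Equiv.Perm (Fin (2 * n - 2)))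
    (hushape : ∀ i : ℕ, 1 ≤ i → i ≤ n - 1 →
      ((permVal1 u (n - i) : ℤ) - ((n - i : ℕ) : ℤ) - ((i - 1 : ℕ) : ℤ)).toNat = lam i)
    {m : ℕ} (hm1 : 1 ≤ m) (hm2 : m ≤ n - 1) :
    (∃ k : ℕ, 1 ≤ k ∧ k ≤ n - 1 ∧ permVal1 u k = 2 * n - 1 - m) ↔
      ∃ i : ℕ, 1 ≤ i ∧ i ≤ n - 1 ∧ lam i = n - m := by
  constructor
  · rintro ⟨k, hk1, hkn, hkv⟩
    have hsh := hushape (n - k) (by omega) (by omega)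
    rw [show n - (n - k) = k by omega] at hsh
    exact ⟨n - k, by omega, by omega, by omega⟩
  · rintro ⟨i, hi1, hin, hival⟩
    have hsh := hushape i hi1 hin
    exact ⟨n - i, by omega, by omega, by omega⟩

theorem stmt_16_general (n : ℕ) (lam : ℕ → ℕ)
    (w : Equiv.Perm (Fin (2 * n)))
    (hwsym : ∀ x : ℕ, 1 ≤ x → x ≤ 2 * n →
      permVal1 w (2 * n + 1 - x) = 2 * n + 1 - permVal1 w x)
    (hwincr : ∀ i j : ℕ, 1 ≤ i → i < j → j ≤ n → permVal1 w i < permVal1 w j)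
    (hwshape : ∀ i : ℕ, 1 ≤ i → i ≤ n - 1 →
      ((permVal1 w (n + 1 - i) : ℤ) - ((n + 1 - i : ℕ) : ℤ) - (i : ℤ)).toNat = lam i)
    (u : Equiv.Perm (Fin (2 * n - 2)))
    (husym : ∀ y : ℕ, 1 ≤ y → y ≤ 2 * n - 2 →
      permVal1 u (2 * n - 1 - y) = 2 * n - 1 - permVal1 u y)
    (hushape : ∀ i : ℕ, 1 ≤ i → i ≤ n - 1 →
      ((permVal1 u (n - i) : ℤ) - ((n - i : ℕ) : ℤ) - ((i - 1 : ℕ) : ℤ)).toNat = lam i) :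
    ∀ m : ℕ, 1 ≤ m → m ≤ n - 1 →
      ((∃ k : ℕ, 1 ≤ k ∧ k ≤ n ∧ permVal1 w k = m) ↔
        (∃ k : ℕ, 1 ≤ k ∧ k ≤ n - 1 ∧ permVal1 u k = m)) ∧
      ((∃ k : ℕ, 1 ≤ k ∧ k ≤ n ∧ permVal1 w k = 2 * n + 1 - m) ↔
        (∃ k : ℕ, 1 ≤ k ∧ k ≤ n - 1 ∧ permVal1 u k = 2 * n - 1 - m)) := by
  intro m hm1 hm2
  have hmw : m ≤ 2 * n := by omega
  have hmu : m ≤ 2 * n - 2 := by omega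
  have hu_len : 2 * n - 2 = 2 * (n - 1) := by omega
  have hreflect : 2 * n - 1 = 2 * n - 2 + 1 := by omega
  have hbig := (exists_permVal1_eq_typeD_iff lam w hwincr hwshape hm1 hm2).trans
    (exists_permVal1_eq_typeB_iff lam u hushape hm1 hm2).symm
  refine ⟨?_, hbig⟩
  rw [hreflect] at husym hbig
  rw [exists_permVal1_eq_iff_not_exists_reflect w rfl hwsym hm1 hmw,
    exists_permVal1_eq_iff_not_exists_reflect u hu_len husym hm1 hmu, hbig]

/-- If the type-D strict partition of the symmetric permutation `w ∈ S_{2n}` and the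
type-B strict partition of the symmetric permutation `u ∈ S_{2n−2}` are both equal to the
strict partition `lam`, then for each `m ∈ {1,…,n−1}`: `m` occurs among `w(1),…,w(n)` iff
it occurs among `u(1),…,u(n−1)`, and `2n+1−m` occurs among `w(1),…,w(n)` iff `2n−1−m`
occurs among `u(1),…,u(n−1)`. -/
theorem stmt_16 (n r : ℕ) (hn : 2 ≤ n) (lam : ℕ → ℕ)
    (hstrict : IsStrictPartition r lam) (hr : r ≤ n - 1) (hlam1 : lam 1 ≤ n - 1)
    (w : Equiv.Perm (Fin (2 * n)))
    (hwsym : ∀ x : ℕ, 1 ≤ x → x ≤ 2 * n →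
      permVal1 w (2 * n + 1 - x) = 2 * n + 1 - permVal1 w x)
    (hwincr : ∀ i j : ℕ, 1 ≤ i → i < j → j ≤ n → permVal1 w i < permVal1 w j)
    (hwshape : ∀ i : ℕ, 1 ≤ i → i ≤ n - 1 →
      ((permVal1 w (n + 1 - i) : ℤ) - ((n + 1 - i : ℕ) : ℤ) - (i : ℤ)).toNat = lam i)
    (u : Equiv.Perm (Fin (2 * n - 2)))
    (husym : ∀ y : ℕ, 1 ≤ y → y ≤ 2 * n - 2 →
      permVal1 u (2 * n - 1 - y) = 2 * n - 1 - permVal1 u y)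
    (huincr : ∀ i j : ℕ, 1 ≤ i → i < j → j ≤ n - 1 → permVal1 u i < permVal1 u j)
    (hushape : ∀ i : ℕ, 1 ≤ i → i ≤ n - 1 →
      ((permVal1 u (n - i) : ℤ) - ((n - i : ℕ) : ℤ) - ((i - 1 : ℕ) : ℤ)).toNat = lam i) :
    ∀ m : ℕ, 1 ≤ m → m ≤ n - 1 →
      ((∃ k : ℕ, 1 ≤ k ∧ k ≤ n ∧ permVal1 w k = m) ↔
        (∃ k : ℕ, 1 ≤ k ∧ k ≤ n - 1 ∧ permVal1 u k = m)) ∧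
      ((∃ k : ℕ, 1 ≤ k ∧ k ≤ n ∧ permVal1 w k = 2 * n + 1 - m) ↔
        (∃ k : ℕ, 1 ≤ k ∧ k ≤ n - 1 ∧ permVal1 u k = 2 * n - 1 - m)) :=
  stmt_16_general n lam w hwsym hwincr hwshape u husym hushape
end
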